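/- arXiv:2303.04956 — 8 statements merged into one kernel-verified Lean document; each statement's English description precedes it below -/
import Mathlib

section
/- Let d ≥ 1, let C ⊆ ℝ^d be a nonempty closed convex cone, and for each t ≥ 1 let ⟨·,·⟩_(t) be an inner product on ℝ^d (a symmetric positive-definite bilinear form) with associated norm ‖·‖_(t). Assume the family of norms is nonincreasing: ‖u‖_(t+1) ≤ ‖u‖_(t) for every u ∈ ℝ^d and t ≥ 1. Let (r_t)_{t≥1} be a sequence in ℝ^d, set R_0 = 0 and R_t = r_1 + ⋯ + r_t, and for each t ≥ 1 let π_(t)(R_{t-1}) denote a point of C minimizing ‖R_{t-1} − r‖_(t) over r ∈ C. If for every t ≥ 1 one has ⟨r_t, R_{t-1} − π_(t)(R_{t-1})⟩_(t) ≤ 0 (Blackwell's algorithm condition), then for every T ≥ 1, inf_{r ∈ C} ‖(1/T)·R_T − r‖_(T) ≤ (1/T)·√(∑_{t=1}^T ‖r_t‖_(t)²). -/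
/-!
Write `a_t = ‖R_{t-1} - π_(t)(R_{t-1})‖_(t)` and `b_t = ‖R_t - π_(t)(R_{t-1})‖_(t)`. Expanding the
square of `R_t - π = (R_{t-1} - π) + r_t`, the Blackwell condition kills the cross term, so
`b_t² ≤ a_t² + ‖r_t‖_(t)²`. Since `π_(t)` minimizes the distance to `C` and the norms decrease,
`a_{t+1} ≤ ‖R_t - π_(t)‖_(t+1) ≤ b_t`. Summing gives `b_T² ≤ ∑_{t ≤ T} ‖r_t‖_(t)²`, and the cone
point `π_(T) / T` witnesses the bound for the average `R_T / T`.
-/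

open Finset

section SymmetricForm

variable {E : Type*} (B : E → E → ℝ)

lemma symmForm_add_add [Add E] (hsymm : ∀ u v, B u v = B v u)
    (hadd : ∀ u u' v, B (u + u') v = B u v + B u' v) (a v : E) :
    B (a + v) (a + v) = B a a + 2 * B v a + B v v := by
  rw [hadd, hsymm a, hsymm v, hadd, hadd, hsymm a v]
  ring

lemma sq_sqrt_symmForm_add_le [Add E] (hsymm : ∀ u v, B u v = B v u)
    (hadd : ∀ u u' v, B (u + u') v = B u v + B u' v) {a v : E} (hva : B v a ≤ 0) :
    √(B (a + v) (a + v)) ^ 2 ≤ √(B a a) ^ 2 + √(B v v) ^ 2 := by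
  -- `√x ^ 2 = max x 0`, which is monotone and subadditive in `x`
  simp only [Real.sq_sqrt', symmForm_add_add B hsymm hadd]
  grind

lemma sqrt_symmForm_smul [SMul ℝ E] (hsymm : ∀ u v, B u v = B v u)
    (hsmul : ∀ (c : ℝ) u v, B (c • u) v = c * B u v) (c : ℝ) (u : E) :
    √(B (c • u) (c • u)) = |c| * √(B u u) := by
  rw [hsmul, hsymm, hsmul, ← mul_assoc, ← sq, Real.sqrt_mul (sq_nonneg c), Real.sqrt_sq_eq_abs]

lemma symmForm_zero_left [Zero E] [SMulWithZero ℝ E]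
    (hsmul : ∀ (c : ℝ) u v, B (c • u) v = c * B u v) (v : E) :
    B 0 v = 0 := by
  simpa using hsmul 0 0 v

end SymmetricForm

lemma sq_le_sum_of_sq_le_sq_add {a b c : ℕ → ℝ} (ha_nonneg : ∀ t ≥ 1, 0 ≤ a t) (ha₁ : a 1 = 0)
    (hb : ∀ t ≥ 1, b t ^ 2 ≤ a t ^ 2 + c t) (hab : ∀ t ≥ 1, a (t + 1) ≤ b t) :
    ∀ T ≥ 1, b T ^ 2 ≤ ∑ t ∈ Icc 1 T, c t := by
  intro T hT
  induction T, hT using Nat.le_induction with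
  | base => simpa [ha₁] using hb 1 le_rfl
  | succ t ht ih =>
    have ha_sq : a (t + 1) ^ 2 ≤ b t ^ 2 :=
      pow_le_pow_left₀ (ha_nonneg (t + 1) (by omega)) (hab t ht) 2
    rw [sum_Icc_succ_top (by omega)]
    linarith [hb (t + 1) (by omega)]

lemma csInf_image_le_of_nonneg {α : Type*} {f : α → ℝ} {s : Set α} (hf : ∀ x ∈ s, 0 ≤ f x)
    {x : α} (hx : x ∈ s) : sInf (f '' s) ≤ f x :=
  csInf_le ⟨0, by rintro _ ⟨y, hy, rfl⟩; exact hf y hy⟩ ⟨x, hx, rfl⟩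

theorem blackwell_time_dependent_guarantee_general
    (d : ℕ) (C : Set (Fin d → ℝ))
    (hCsmul : ∀ z ∈ C, ∀ l : ℝ, 0 ≤ l → l • z ∈ C)
    -- the time-dependent dot products
    (inn : ℕ → (Fin d → ℝ) → (Fin d → ℝ) → ℝ)
    (hsymm : ∀ t ≥ 1, ∀ u v, inn t u v = inn t v u)
    (haddl : ∀ t ≥ 1, ∀ u u' v, inn t (u + u') v = inn t u v + inn t u' v)
    (hsmul : ∀ t ≥ 1, ∀ (c : ℝ) (u v), inn t (c • u) v = c * inn t u v)
    -- the associated norms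
    (nrm : ℕ → (Fin d → ℝ) → ℝ)
    (hnrm : ∀ t ≥ 1, ∀ u, nrm t u = Real.sqrt (inn t u u))
    -- the family of norms is nonincreasing
    (hmono : ∀ t ≥ 1, ∀ u, nrm (t + 1) u ≤ nrm t u)
    -- the outcomes and their partial sums (R 0 = 0)
    (r : ℕ → Fin d → ℝ) (R : ℕ → Fin d → ℝ)
    (hR : ∀ t, R t = ∑ s ∈ Finset.Icc 1 t, r s)
    -- `p t` is a point of `C` minimizing the `(t)`-distance to `R (t-1)`
    (p : ℕ → Fin d → ℝ)
    (hpC : ∀ t ≥ 1, p t ∈ C)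
    (hpmin : ∀ t ≥ 1, ∀ q ∈ C, nrm t (R (t - 1) - p t) ≤ nrm t (R (t - 1) - q))
    -- Blackwell's algorithm condition
    (hBlackwell : ∀ t ≥ 1, inn t (r t) (R (t - 1) - p t) ≤ 0) :
    ∀ T ≥ 1, sInf ((fun q => nrm T ((T : ℝ)⁻¹ • R T - q)) '' C) ≤
      (T : ℝ)⁻¹ * Real.sqrt (∑ t ∈ Finset.Icc 1 T, nrm t (r t) ^ 2) := by
  have hnrm_nonneg : ∀ t ≥ 1, ∀ u, 0 ≤ nrm t u := fun t ht u => (hnrm t ht u).symm ▸ by positivity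
  have hzero_mem : (0 : Fin d → ℝ) ∈ C := by simpa using hCsmul (p 1) (hpC 1 le_rfl) 0 le_rfl
  have hdist₁ : nrm 1 (R 0 - p 1) = 0 := by
    refine le_antisymm ?_ (hnrm_nonneg 1 le_rfl _)
    simpa [hR, hnrm 1 le_rfl, symmForm_zero_left _ (hsmul 1 le_rfl)] using
      hpmin 1 le_rfl 0 hzero_mem
  have hstep : ∀ t ≥ 1, nrm t (R t - p t) ^ 2 ≤ nrm t (R (t - 1) - p t) ^ 2 + nrm t (r t) ^ 2 := by
    intro t ht
    obtain ⟨s, rfl⟩ := Nat.exists_eq_add_of_le' ht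
    have hsplit : R (s + 1) - p (s + 1) = (R s - p (s + 1)) + r (s + 1) := by
      rw [hR, hR, sum_Icc_succ_top (by omega)]; abel
    simp only [hnrm _ ht, hsplit, Nat.add_sub_cancel]
    exact sq_sqrt_symmForm_add_le _ (hsymm _ ht) (haddl _ ht) (hBlackwell _ ht)
  have hnext : ∀ t ≥ 1, nrm (t + 1) (R t - p (t + 1)) ≤ nrm t (R t - p t) := fun t ht =>
    (hpmin (t + 1) (by omega) (p t) (hpC t ht)).trans (hmono t ht _)
  have hbound := sq_le_sum_of_sq_le_sq_add (a := fun t => nrm t (R (t - 1) - p t))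
    (b := fun t => nrm t (R t - p t)) (fun t ht => hnrm_nonneg t ht _) hdist₁ hstep hnext
  intro T hT
  have hTinv : (0 : ℝ) ≤ (T : ℝ)⁻¹ := by positivity
  calc sInf ((fun q => nrm T ((T : ℝ)⁻¹ • R T - q)) '' C)
      ≤ nrm T ((T : ℝ)⁻¹ • R T - (T : ℝ)⁻¹ • p T) :=
        csInf_image_le_of_nonneg (fun q _ => hnrm_nonneg T hT _) (hCsmul _ (hpC T hT) _ hTinv)
    _ = (T : ℝ)⁻¹ * nrm T (R T - p T) := by
        rw [← smul_sub, hnrm T hT, hnrm T hT,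
          sqrt_symmForm_smul _ (hsymm T hT) (hsmul T hT), abs_of_nonneg hTinv]
    _ ≤ (T : ℝ)⁻¹ * Real.sqrt (∑ t ∈ Finset.Icc 1 T, nrm t (r t) ^ 2) := by
        gcongr
        exact Real.le_sqrt_of_sq_le (hbound T hT)

/-- Guarantee of Blackwell's algorithm with time-dependent dot products:
if the family of norms is nonincreasing and the Blackwell condition holds at
each step, the distance (measured with the time-`T` norm) of the average
outcome to the closed convex cone `C` is at most
`(1/T) * sqrt (∑_{t=1}^T ‖r_t‖_(t)²)`. -/
theorem blackwell_time_dependent_guarantee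
    (d : ℕ) (hd : 1 ≤ d) (C : Set (Fin d → ℝ))
    (hCne : C.Nonempty) (hCclosed : IsClosed C)
    (hCadd : ∀ z ∈ C, ∀ z' ∈ C, z + z' ∈ C)
    (hCsmul : ∀ z ∈ C, ∀ l : ℝ, 0 ≤ l → l • z ∈ C)
    -- the time-dependent dot products
    (inn : ℕ → (Fin d → ℝ) → (Fin d → ℝ) → ℝ)
    (hsymm : ∀ t ≥ 1, ∀ u v, inn t u v = inn t v u)
    (haddl : ∀ t ≥ 1, ∀ u u' v, inn t (u + u') v = inn t u v + inn t u' v)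
    (hsmul : ∀ t ≥ 1, ∀ (c : ℝ) (u v), inn t (c • u) v = c * inn t u v)
    (hposdef : ∀ t ≥ 1, ∀ u, u ≠ 0 → 0 < inn t u u)
    -- the associated norms
    (nrm : ℕ → (Fin d → ℝ) → ℝ)
    (hnrm : ∀ t ≥ 1, ∀ u, nrm t u = Real.sqrt (inn t u u))
    -- the family of norms is nonincreasing
    (hmono : ∀ t ≥ 1, ∀ u, nrm (t + 1) u ≤ nrm t u)
    -- the outcomes and their partial sums (R 0 = 0)
    (r : ℕ → Fin d → ℝ) (R : ℕ → Fin d → ℝ)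
    (hR : ∀ t, R t = ∑ s ∈ Finset.Icc 1 t, r s)
    -- `p t` is a point of `C` minimizing the `(t)`-distance to `R (t-1)`
    (p : ℕ → Fin d → ℝ)
    (hpC : ∀ t ≥ 1, p t ∈ C)
    (hpmin : ∀ t ≥ 1, ∀ q ∈ C, nrm t (R (t - 1) - p t) ≤ nrm t (R (t - 1) - q))
    -- Blackwell's algorithm condition
    (hBlackwell : ∀ t ≥ 1, inn t (r t) (R (t - 1) - p t) ≤ 0) :
    ∀ T ≥ 1, sInf ((fun q => nrm T ((T : ℝ)⁻¹ • R T - q)) '' C) ≤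
      (T : ℝ)⁻¹ * Real.sqrt (∑ t ∈ Finset.Icc 1 T, nrm t (r t) ^ 2) :=
  blackwell_time_dependent_guarantee_general d C hCsmul inn hsymm haddl hsmul nrm hnrm hmono r R hR
    p hpC hpmin hBlackwell
end

section
/- Let d ≥ 1, let C ⊆ ℝ^d be a nonempty closed convex cone, and for each t ≥ 1 let ⟨·,·⟩_(t) be an inner product on ℝ^d (a symmetric positive-definite bilinear form) with associated norm ‖·‖_(t). Assume ‖u‖_(t+1) ≤ ‖u‖_(t) for every u ∈ ℝ^d and t ≥ 1. Let (r_t)_{t≥1} be a sequence in ℝ^d, set R_0 = 0, R_t = r_1 + ⋯ + r_t, and for each t ≥ 1 let π_(t)(R_{t-1}) denote a point of C minimizing ‖R_{t-1} − r‖_(t) over r ∈ C. If for a given t ≥ 1 one has ⟨r_t, R_{t-1} − π_(t)(R_{t-1})⟩_(t) ≤ 0, then inf_{r ∈ C} ‖R_t − r‖_(t)² ≤ inf_{r ∈ C} ‖R_{t-1} − r‖_(t-1)² + ‖r_t‖_(t)², where for t = 1 the first term on the right is interpreted as 0 (since R_0 = 0 ∈ C). -/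
open Finset

/-!
With `a = R_{t-1} - π_(t)(R_{t-1})` and `b = r_t`, the point `π_(t)(R_{t-1}) ∈ C` witnesses
`inf_{r ∈ C} ‖R_t - r‖_(t)² ≤ ‖a + b‖_(t)² = ‖a‖_(t)² + 2⟨b, a⟩_(t) + ‖b‖_(t)² ≤ ‖a‖_(t)² + ‖b‖_(t)²`
by the Blackwell condition. Finally `‖a‖_(t)` is the `(t)`-distance from `R_{t-1}` to `C`, which
is at most the `(t-1)`-distance by monotonicity of the norms, and is `0` for `t = 1` since
`R_0 = 0 ∈ C`.
-/

section Form

variable {E : Type*} [AddCommGroup E] {B : E → E → ℝ}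

theorem apply_zero_left_of_map_add_left (hadd : ∀ u u' v, B (u + u') v = B u v + B u' v)
    (v : E) : B 0 v = 0 := by
  have := hadd 0 0 v
  rw [add_zero] at this
  linarith

theorem apply_self_nonneg_of_pos (hadd : ∀ u u' v, B (u + u') v = B u v + B u' v)
    (hpos : ∀ u, u ≠ 0 → 0 < B u u) (u : E) : 0 ≤ B u u := by
  rcases eq_or_ne u 0 with rfl | hu
  · exact (apply_zero_left_of_map_add_left hadd 0).ge
  · exact (hpos u hu).le

theorem apply_add_self_le_of_apply_nonpos (hsymm : ∀ u v, B u v = B v u)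
    (hadd : ∀ u u' v, B (u + u') v = B u v + B u' v) {a b : E} (hba : B b a ≤ 0) :
    B (a + b) (a + b) ≤ B a a + B b b := by
  have hexpand : B (a + b) (a + b) = B a a + 2 * B b a + B b b := by
    rw [hadd, hsymm a, hsymm b, hadd, hadd, hsymm a b]
    ring
  linarith

end Form

section Infimum

variable {α : Type*} {C : Set α} {f : α → ℝ}

theorem csInf_image_sq_le {x : α} (hx : x ∈ C) :
    sInf ((fun q => f q ^ 2) '' C) ≤ f x ^ 2 :=
  csInf_le ⟨0, by rintro _ ⟨q, -, rfl⟩; positivity⟩ (Set.mem_image_of_mem _ hx)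

theorem sq_le_csInf_image_sq {a : ℝ} (hC : C.Nonempty) (ha : 0 ≤ a) (haf : ∀ q ∈ C, a ≤ f q) :
    a ^ 2 ≤ sInf ((fun q => f q ^ 2) '' C) :=
  le_csInf (hC.image _) <| by
    rintro _ ⟨q, hq, rfl⟩
    exact pow_le_pow_left₀ ha (haf q hq) 2

end Infimum

theorem blackwell_one_step_inequality_general
    (d : ℕ) (C : Set (Fin d → ℝ))
    (hCne : C.Nonempty)
    (hCsmul : ∀ z ∈ C, ∀ l : ℝ, 0 ≤ l → l • z ∈ C)
    -- the time-dependent dot products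
    (inn : ℕ → (Fin d → ℝ) → (Fin d → ℝ) → ℝ)
    (hsymm : ∀ t ≥ 1, ∀ u v, inn t u v = inn t v u)
    (haddl : ∀ t ≥ 1, ∀ u u' v, inn t (u + u') v = inn t u v + inn t u' v)
    (hposdef : ∀ t ≥ 1, ∀ u, u ≠ 0 → 0 < inn t u u)
    -- the associated norms
    (nrm : ℕ → (Fin d → ℝ) → ℝ)
    (hnrm : ∀ t ≥ 1, ∀ u, nrm t u = Real.sqrt (inn t u u))
    -- the family of norms is nonincreasing
    (hmono : ∀ t ≥ 1, ∀ u, nrm (t + 1) u ≤ nrm t u)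
    -- the outcomes and their partial sums (R 0 = 0)
    (r : ℕ → Fin d → ℝ) (R : ℕ → Fin d → ℝ)
    (hR : ∀ t, R t = ∑ s ∈ Finset.Icc 1 t, r s)
    -- `p t` is a point of `C` minimizing the `(t)`-distance to `R (t-1)`
    (p : ℕ → Fin d → ℝ)
    (hpC : ∀ t ≥ 1, p t ∈ C)
    (hpmin : ∀ t ≥ 1, ∀ q ∈ C, nrm t (R (t - 1) - p t) ≤ nrm t (R (t - 1) - q)) :
    ∀ t ≥ 1, inn t (r t) (R (t - 1) - p t) ≤ 0 →
      sInf ((fun q => nrm t (R t - q) ^ 2) '' C) ≤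
        (if t = 1 then 0
          else sInf ((fun q => nrm (t - 1) (R (t - 1) - q) ^ 2) '' C)) +
        nrm t (r t) ^ 2 := by
  intro t ht hB
  obtain ⟨s, rfl⟩ : ∃ s, t = s + 1 := ⟨t - 1, by omega⟩
  simp only [Nat.add_sub_cancel] at hpmin hB ⊢
  have hsq (u) : nrm (s + 1) u ^ 2 = inn (s + 1) u u := by
    rw [hnrm _ ht, Real.sq_sqrt (apply_self_nonneg_of_pos (haddl _ ht) (hposdef _ ht) u)]
  have hRsucc : R (s + 1) = R s + r (s + 1) := by
    rw [hR, hR, Finset.sum_Icc_succ_top (by omega)]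
  have hprev : nrm (s + 1) (R s - p (s + 1)) ^ 2 ≤
      if s + 1 = 1 then 0 else sInf ((fun q => nrm s (R s - q) ^ 2) '' C) := by
    split_ifs with hs
    · obtain rfl : s = 0 := by omega
      obtain ⟨z, hz⟩ := hCne
      have h0C : (0 : Fin d → ℝ) ∈ C := by simpa using hCsmul z hz 0 le_rfl
      have hR0 : R 0 = 0 := by simp [hR]
      calc nrm 1 (R 0 - p 1) ^ 2 ≤ nrm 1 (R 0 - 0) ^ 2 :=
            pow_le_pow_left₀ (by rw [hnrm 1 le_rfl]; positivity) (hpmin 1 le_rfl 0 h0C) 2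
        _ = 0 := by rw [hR0, sub_zero, hsq, apply_zero_left_of_map_add_left (haddl 1 le_rfl)]
    · refine sq_le_csInf_image_sq hCne (by rw [hnrm _ ht]; positivity) fun q hq => ?_
      exact (hpmin _ ht q hq).trans (hmono s (by omega) _)
  calc sInf ((fun q => nrm (s + 1) (R (s + 1) - q) ^ 2) '' C)
      ≤ nrm (s + 1) (R (s + 1) - p (s + 1)) ^ 2 := csInf_image_sq_le (hpC _ ht)
    _ = inn (s + 1) (R s - p (s + 1) + r (s + 1)) (R s - p (s + 1) + r (s + 1)) := by
        rw [hRsucc, add_sub_right_comm, hsq]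
    _ ≤ inn (s + 1) (R s - p (s + 1)) (R s - p (s + 1)) + inn (s + 1) (r (s + 1)) (r (s + 1)) :=
        apply_add_self_le_of_apply_nonpos (hsymm _ ht) (haddl _ ht) hB
    _ = nrm (s + 1) (R s - p (s + 1)) ^ 2 + nrm (s + 1) (r (s + 1)) ^ 2 := by rw [hsq, hsq]
    _ ≤ _ := add_le_add_left hprev _

/-- One-step inequality in the analysis of Blackwell's algorithm with
time-dependent dot products: if the Blackwell condition holds at a given
step `t ≥ 1`, then
`inf_{r ∈ C} ‖R_t − r‖_(t)² ≤ inf_{r ∈ C} ‖R_{t−1} − r‖_(t−1)² + ‖r_t‖_(t)²`,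
where for `t = 1` the first term on the right is interpreted as `0`. -/
theorem blackwell_one_step_inequality
    (d : ℕ) (hd : 1 ≤ d) (C : Set (Fin d → ℝ))
    (hCne : C.Nonempty) (hCclosed : IsClosed C)
    (hCadd : ∀ z ∈ C, ∀ z' ∈ C, z + z' ∈ C)
    (hCsmul : ∀ z ∈ C, ∀ l : ℝ, 0 ≤ l → l • z ∈ C)
    -- the time-dependent dot products
    (inn : ℕ → (Fin d → ℝ) → (Fin d → ℝ) → ℝ)
    (hsymm : ∀ t ≥ 1, ∀ u v, inn t u v = inn t v u)
    (haddl : ∀ t ≥ 1, ∀ u u' v, inn t (u + u') v = inn t u v + inn t u' v)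
    (hsmul : ∀ t ≥ 1, ∀ (c : ℝ) (u v), inn t (c • u) v = c * inn t u v)
    (hposdef : ∀ t ≥ 1, ∀ u, u ≠ 0 → 0 < inn t u u)
    -- the associated norms
    (nrm : ℕ → (Fin d → ℝ) → ℝ)
    (hnrm : ∀ t ≥ 1, ∀ u, nrm t u = Real.sqrt (inn t u u))
    -- the family of norms is nonincreasing
    (hmono : ∀ t ≥ 1, ∀ u, nrm (t + 1) u ≤ nrm t u)
    -- the outcomes and their partial sums (R 0 = 0)
    (r : ℕ → Fin d → ℝ) (R : ℕ → Fin d → ℝ)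
    (hR : ∀ t, R t = ∑ s ∈ Finset.Icc 1 t, r s)
    -- `p t` is a point of `C` minimizing the `(t)`-distance to `R (t-1)`
    (p : ℕ → Fin d → ℝ)
    (hpC : ∀ t ≥ 1, p t ∈ C)
    (hpmin : ∀ t ≥ 1, ∀ q ∈ C, nrm t (R (t - 1) - p t) ≤ nrm t (R (t - 1) - q)) :
    ∀ t ≥ 1, inn t (r t) (R (t - 1) - p t) ≤ 0 →
      sInf ((fun q => nrm t (R t - q) ^ 2) '' C) ≤
        (if t = 1 then 0
          else sInf ((fun q => nrm (t - 1) (R (t - 1) - q) ^ 2) '' C)) +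
        nrm t (r t) ^ 2 :=
  blackwell_one_step_inequality_general d C hCne hCsmul inn hsymm haddl hposdef nrm hnrm hmono r R
    hR p hpC hpmin
end

section
/- Let d ≥ 1 and let (μ_t^(1))_{t≥1}, …, (μ_t^(d))_{t≥1} be d positive nonincreasing real sequences. For t ≥ 1 define the dot product ⟨u,v⟩_(t) = ∑_{i=1}^d (μ_t^(i))² u^(i) v^(i) on ℝ^d with associated norm ‖u‖_(t) = ⟨u,u⟩_(t)^{1/2}. Let (r_t)_{t≥1} be a sequence in ℝ^d, set R_0 = 0 and R_t = r_1 + ⋯ + r_t. Assume that for every t ≥ 1, ∑_{i=1}^d (μ_t^(i))² · r_t^(i) · max(0, R_{t-1}^(i)) ≤ 0 (the Blackwell algorithm condition for the target C = ℝ₋^d, whose projection residual is the componentwise positive part). Then for every component 1 ≤ i ≤ d and every T ≥ 1, (1/T)·∑_{t=1}^T r_t^(i) ≤ (1/(T·μ_T^(i)))·√(∑_{t=1}^T ‖r_t‖_(t)²). -/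
/-!
The potential `Φ_t = ‖(R_t)⁺‖²_(t)` is the squared `(t)`-distance from `R_t` to `ℝ₋^d`.
Expanding `(a + b)⁺² ≤ a⁺² + 2 b a⁺ + b²` coordinatewise, Blackwell's condition kills the
cross term, so `‖(R_t)⁺‖²_(t) ≤ ‖(R_{t-1})⁺‖²_(t) + ‖r_t‖²_(t)`, and since the weights are
nonincreasing, `‖(R_{t-1})⁺‖²_(t) ≤ Φ_{t-1}`. Hence `Φ_T ≤ ∑_{t ≤ T} ‖r_t‖²_(t)`, and a single
coordinate of the potential bounds `μ_T^(i) R_T^(i)` by the square root of that sum.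
-/

open Finset

section WeightedSqNorm

variable {ι : Type*} [Fintype ι]

/-- `‖u‖²` for the dot product `⟨u, v⟩ = ∑ i, w i ^ 2 * u i * v i`. -/
def weightedSqNorm (w u : ι → ℝ) : ℝ := ∑ i, w i ^ 2 * u i ^ 2

lemma weightedSqNorm_nonneg (w u : ι → ℝ) : 0 ≤ weightedSqNorm w u :=
  sum_nonneg fun _ _ => by positivity

lemma sq_mul_sq_le_weightedSqNorm (w u : ι → ℝ) (i : ι) :
    w i ^ 2 * u i ^ 2 ≤ weightedSqNorm w u :=
  single_le_sum (f := fun j => w j ^ 2 * u j ^ 2) (fun _ _ => by positivity) (mem_univ i)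

lemma weightedSqNorm_le_of_weight_le {w w' : ι → ℝ} (h₀ : ∀ i, 0 ≤ w' i)
    (h : ∀ i, w' i ≤ w i) (u : ι → ℝ) : weightedSqNorm w' u ≤ weightedSqNorm w u :=
  sum_le_sum fun i _ =>
    mul_le_mul_of_nonneg_right (pow_le_pow_left₀ (h₀ i) (h i) 2) (sq_nonneg _)

lemma sq_max_zero_add_le (a b : ℝ) :
    max 0 (a + b) ^ 2 ≤ max 0 a ^ 2 + 2 * b * max 0 a + b ^ 2 := by
  rcases le_or_gt (a + b) 0 with h | h
  · rw [max_eq_left h]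
    nlinarith [le_max_left 0 a, sq_nonneg (max 0 a + b)]
  · rw [max_eq_right h.le]
    nlinarith [le_max_left 0 a, le_max_right 0 a]

lemma weightedSqNorm_max_zero_add_le (w x y : ι → ℝ)
    (hBlackwell : ∑ i, w i ^ 2 * y i * max 0 (x i) ≤ 0) :
    weightedSqNorm w (fun i => max 0 (x i + y i)) ≤
      weightedSqNorm w (fun i => max 0 (x i)) + weightedSqNorm w y := by
  have hcoord : ∀ i, w i ^ 2 * max 0 (x i + y i) ^ 2 ≤
      w i ^ 2 * max 0 (x i) ^ 2 + 2 * (w i ^ 2 * y i * max 0 (x i)) + w i ^ 2 * y i ^ 2 := by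
    intro i
    nlinarith [sq_max_zero_add_le (x i) (y i), sq_nonneg (w i)]
  calc weightedSqNorm w (fun i => max 0 (x i + y i))
      ≤ ∑ i, (w i ^ 2 * max 0 (x i) ^ 2 + 2 * (w i ^ 2 * y i * max 0 (x i)) +
          w i ^ 2 * y i ^ 2) := sum_le_sum fun i _ => hcoord i
    _ = weightedSqNorm w (fun i => max 0 (x i)) +
          2 * ∑ i, w i ^ 2 * y i * max 0 (x i) + weightedSqNorm w y := by
      rw [sum_add_distrib, sum_add_distrib, mul_sum]
      rfl
    _ ≤ weightedSqNorm w (fun i => max 0 (x i)) + weightedSqNorm w y := by linarith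

lemma weightedSqNorm_max_zero_cumsum_le (μ r R : ℕ → ι → ℝ)
    (hμpos : ∀ t ≥ 1, ∀ i, 0 < μ t i)
    (hμmono : ∀ t ≥ 1, ∀ i, μ (t + 1) i ≤ μ t i)
    (hR : ∀ t, R t = ∑ s ∈ Icc 1 t, r s)
    (hBlackwell : ∀ t ≥ 1, ∑ i, μ t i ^ 2 * r t i * max 0 (R (t - 1) i) ≤ 0) :
    ∀ T ≥ 1, weightedSqNorm (μ T) (fun i => max 0 (R T i)) ≤
      ∑ t ∈ Icc 1 T, weightedSqNorm (μ t) (r t) := by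
  have hR0 : R 0 = 0 := by simp [hR]
  have hRsucc : ∀ t, R (t + 1) = R t + r (t + 1) := fun t => by
    simp only [hR, sum_Icc_succ_top (Nat.le_add_left 1 t)]
  have hstep : ∀ t, weightedSqNorm (μ (t + 1)) (fun i => max 0 (R (t + 1) i)) ≤
      weightedSqNorm (μ (t + 1)) (fun i => max 0 (R t i)) +
        weightedSqNorm (μ (t + 1)) (r (t + 1)) := fun t => by
    simpa only [hRsucc, Pi.add_apply] using
      weightedSqNorm_max_zero_add_le (μ (t + 1)) (R t) (r (t + 1)) (hBlackwell (t + 1) t.succ_pos)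
  refine Nat.le_induction ?_ fun T hT ih => ?_
  · simpa [hR0, weightedSqNorm] using hstep 0
  · have hweight := weightedSqNorm_le_of_weight_le (fun i => (hμpos (T + 1) T.succ_pos i).le)
      (hμmono T hT) (fun i => max 0 (R T i))
    rw [sum_Icc_succ_top (by omega)]
    linarith [hstep T]

end WeightedSqNorm

lemma le_sqrt_div_of_sq_mul_max_zero_sq_le {m a S : ℝ} (hm : 0 < m)
    (h : m ^ 2 * max 0 a ^ 2 ≤ S) : a ≤ Real.sqrt S / m := by
  have hsqrt : m * max 0 a ≤ Real.sqrt S :=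
    (Real.le_sqrt (by positivity) (le_trans (by positivity) h)).2 (by rwa [mul_pow])
  rw [le_div_iff₀ hm]
  nlinarith [le_max_right 0 a]

theorem blackwell_orthant_componentwise_rates_general
    (d : ℕ) (μ : ℕ → Fin d → ℝ)
    (hμpos : ∀ t ≥ 1, ∀ i, 0 < μ t i)
    (hμmono : ∀ t ≥ 1, ∀ i, μ (t + 1) i ≤ μ t i)
    (r : ℕ → Fin d → ℝ) (R : ℕ → Fin d → ℝ)
    (hR : ∀ t, R t = ∑ s ∈ Finset.Icc 1 t, r s)
    -- Blackwell's algorithm condition for the target `ℝ₋^d`, whose projection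
    -- residual is the componentwise positive part
    (hBlackwell : ∀ t ≥ 1, ∑ i, μ t i ^ 2 * r t i * max 0 (R (t - 1) i) ≤ 0) :
    ∀ i : Fin d, ∀ T : ℕ, 1 ≤ T →
      (T : ℝ)⁻¹ * ∑ t ∈ Finset.Icc 1 T, r t i ≤
        ((T : ℝ) * μ T i)⁻¹ *
          Real.sqrt (∑ t ∈ Finset.Icc 1 T, ∑ i', μ t i' ^ 2 * r t i' ^ 2) := by
  intro i T hT
  have henergy := weightedSqNorm_max_zero_cumsum_le μ r R hμpos hμmono hR hBlackwell T hT
  have hcoord := (sq_mul_sq_le_weightedSqNorm (μ T) (fun j => max 0 (R T j)) i).trans henergy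
  have hRT := le_sqrt_div_of_sq_mul_max_zero_sq_le (hμpos T hT i) hcoord
  rw [hR, Finset.sum_apply] at hRT
  calc (T : ℝ)⁻¹ * ∑ t ∈ Icc 1 T, r t i
      ≤ (T : ℝ)⁻¹ * (Real.sqrt (∑ t ∈ Icc 1 T, weightedSqNorm (μ t) (r t)) / μ T i) :=
        mul_le_mul_of_nonneg_left hRT (by positivity)
    _ = ((T : ℝ) * μ T i)⁻¹ *
          Real.sqrt (∑ t ∈ Icc 1 T, ∑ i', μ t i' ^ 2 * r t i' ^ 2) := by
      rw [div_eq_mul_inv, mul_inv]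
      unfold weightedSqNorm
      ring

/-- Corollary 1: with the weighted dot products
`⟨u,v⟩_(t) = ∑ i, (μ_t^(i))² u^(i) v^(i)` given by positive nonincreasing
sequences `μ^(i)`, Blackwell's algorithm for the target `ℝ₋^d` gives, for each
component `i`, `(1/T) ∑_{t≤T} r_t^(i) ≤ (1/(T μ_T^(i))) √(∑_{t≤T} ‖r_t‖_(t)²)`. -/
theorem blackwell_orthant_componentwise_rates
    (d : ℕ) (hd : 1 ≤ d) (μ : ℕ → Fin d → ℝ)
    (hμpos : ∀ t ≥ 1, ∀ i, 0 < μ t i)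
    (hμmono : ∀ t ≥ 1, ∀ i, μ (t + 1) i ≤ μ t i)
    (r : ℕ → Fin d → ℝ) (R : ℕ → Fin d → ℝ)
    (hR : ∀ t, R t = ∑ s ∈ Finset.Icc 1 t, r s)
    -- Blackwell's algorithm condition for the target `ℝ₋^d`, whose projection
    -- residual is the componentwise positive part
    (hBlackwell : ∀ t ≥ 1, ∑ i, μ t i ^ 2 * r t i * max 0 (R (t - 1) i) ≤ 0) :
    ∀ i : Fin d, ∀ T : ℕ, 1 ≤ T →
      (T : ℝ)⁻¹ * ∑ t ∈ Finset.Icc 1 T, r t i ≤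
        ((T : ℝ) * μ T i)⁻¹ *
          Real.sqrt (∑ t ∈ Finset.Icc 1 T, ∑ i', μ t i' ^ 2 * r t i' ^ 2) :=
  blackwell_orthant_componentwise_rates_general d μ hμpos hμmono r R hR hBlackwell
end

section
/- Let A be a nonempty compact convex subset of a finite-dimensional real vector space V, let B be a nonempty convex subset of a finite-dimensional real vector space W, let g : V × W → ℝ^d be affine in each of its two variables, let C ⊆ ℝ^d be a nonempty closed convex cone, and for each t ≥ 1 let ⟨·,·⟩_(t) be an inner product on ℝ^d with associated norm ‖·‖_(t) and projection π_(t)^C onto C. Then the following are equivalent: (1) for every t ≥ 1 and every R ∈ ℝ^d there exists a ∈ A such that for all b ∈ B, ⟨g(a,b), R − π_(t)^C(R)⟩_(t) ≤ 0 (Blackwell's condition); (2) for every b ∈ B there exists a ∈ A with g(a,b) ∈ C. In particular, whether Blackwell's condition holds does not depend on the sequence of dot products. -/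
theorem aff_decomp {V E : Type*} [AddCommGroup V] [Module ℝ V] [AddCommGroup E] [Module ℝ E]
    (f : V → E) (hf : ∀ (a a' : V) (θ : ℝ), f ((1 - θ) • a + θ • a') = (1 - θ) • f a + θ • f a') :
    ∃ L : V →ₗ[ℝ] E, ∀ x, f x = L x + f 0 := by
  have h1 : ∀ (θ : ℝ) (a : V), f (θ • a) = θ • f a + (1 - θ) • f 0 := by
    intro θ a
    have := hf 0 a θ
    simpa [add_comm] using this
  have h2 : ∀ a a' : V, f (a + a') = f a + f a' - f 0 := by
    intro a a'
    have key := hf ((2:ℝ) • a) ((2:ℝ) • a') (1/2)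
    have e1 : ((1:ℝ) - 1/2) • ((2:ℝ) • a) + (1/2 : ℝ) • ((2:ℝ) • a') = a + a' := by
      rw [smul_smul, smul_smul]; norm_num
    rw [e1] at key
    have e2 : f ((2:ℝ) • a) = (2:ℝ) • f a + (-1 : ℝ) • f 0 := by
      have := h1 2 a; norm_num at this; rw [this]; module
    have e3 : f ((2:ℝ) • a') = (2:ℝ) • f a' + (-1 : ℝ) • f 0 := by
      have := h1 2 a'; norm_num at this; rw [this]; module
    rw [e2, e3] at key
    rw [key]; module
  refine ⟨⟨⟨fun x => f x - f 0, ?_⟩, ?_⟩, fun x => by show f x = (f x - f 0) + f 0; abel⟩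
  · intro a a'; show f (a + a') - f 0 = (f a - f 0) + (f a' - f 0); rw [h2]; abel
  · intro c x
    show f (c • x) - f 0 = c • (f x - f 0)
    rw [h1 c x]; module

theorem pi_expand {n : ℕ} {E : Type*} [AddCommGroup E] [Module ℝ E]
    (L : (Fin n → ℝ) →ₗ[ℝ] E) (x : Fin n → ℝ) :
    L x = ∑ i, x i • L (Pi.single i 1) := by
  have hx : ∑ i, (x i) • (Pi.single i 1 : Fin n → ℝ) = x := by
    have h2 : ∀ i : Fin n, (x i) • (Pi.single i 1 : Fin n → ℝ) = Pi.single i (x i) := by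
      intro i; rw [← Pi.single_smul, smul_eq_mul, mul_one]
    calc ∑ i, (x i) • (Pi.single i 1 : Fin n → ℝ) = ∑ i, Pi.single i (x i) :=
          Finset.sum_congr rfl fun i _ => h2 i
      _ = x := Finset.univ_sum_single x
  conv_lhs => rw [← hx]
  rw [map_sum]
  exact Finset.sum_congr rfl fun i _ => map_smul L _ _

theorem bilin_cont {n : ℕ} (f : (Fin n → ℝ) →ₗ[ℝ] (Fin n → ℝ) →ₗ[ℝ] ℝ) :
    Continuous (fun p : (Fin n → ℝ) × (Fin n → ℝ) => f p.1 p.2) := by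
  have : (fun p : (Fin n → ℝ) × (Fin n → ℝ) => f p.1 p.2)
      = fun p => ∑ i, p.1 i * f (Pi.single i 1) p.2 := by
    funext p
    rw [pi_expand f p.1]
    simp [LinearMap.sum_apply, smul_eq_mul]
  rw [this]
  refine continuous_finset_sum _ fun i _ => ?_
  exact ((continuous_apply i).comp continuous_fst).mul
    ((f (Pi.single i 1)).continuous_of_finiteDimensional.comp continuous_snd)

theorem quad_coercive {d : ℕ} (hd : 1 ≤ d) (N : (Fin d → ℝ) → ℝ)
    (hcont : Continuous N) (hpos : ∀ x, x ≠ 0 → 0 < N x)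
    (hhom : ∀ (c : ℝ) x, N (c • x) = c ^ 2 * N x) :
    ∃ ε > 0, ∀ x, ε * ‖x‖ ^ 2 ≤ N x := by
  haveI : Nonempty (Fin d) := ⟨⟨0, hd⟩⟩
  have hsne : (Metric.sphere (0 : Fin d → ℝ) 1).Nonempty :=
    NormedSpace.sphere_nonempty.2 zero_le_one
  have hscomp : IsCompact (Metric.sphere (0 : Fin d → ℝ) 1) := isCompact_sphere _ _
  obtain ⟨x₀, hx₀, hmin⟩ := hscomp.exists_isMinOn hsne hcont.continuousOn
  have hx₀norm : ‖x₀‖ = 1 := by simpa using hx₀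
  have hx₀ne : x₀ ≠ 0 := by intro h; rw [h] at hx₀norm; simp at hx₀norm
  refine ⟨N x₀, hpos x₀ hx₀ne, fun x => ?_⟩
  rcases eq_or_ne x 0 with rfl | hx
  · simp
    have := hhom 0 0
    simp at this
    simp [this]
  · have hnx : (0:ℝ) < ‖x‖ := norm_pos_iff.2 hx
    have hmem : ‖x‖⁻¹ • x ∈ Metric.sphere (0 : Fin d → ℝ) 1 := by
      simp [norm_smul, abs_of_pos (inv_pos.2 hnx), inv_mul_cancel₀ hnx.ne']
    have h1 : N x₀ ≤ N (‖x‖⁻¹ • x) := hmin hmem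
    rw [hhom] at h1
    have h2 : N x₀ * ‖x‖ ^ 2 ≤ N x := by
      have h3 := mul_le_mul_of_nonneg_right h1 (le_of_lt (pow_pos hnx 2))
      have h4 : ‖x‖⁻¹ ^ 2 * N x * ‖x‖ ^ 2 = N x := by field_simp
      nlinarith [h3, h4]
    linarith

theorem pi_expand' {ι : Type*} [Fintype ι] [DecidableEq ι] {E : Type*} [AddCommGroup E] [Module ℝ E]
    (L : (ι → ℝ) →ₗ[ℝ] E) (x : ι → ℝ) :
    L x = ∑ i, x i • L (Pi.single i 1) := by
  have hx : ∑ i, (x i) • (Pi.single i 1 : ι → ℝ) = x := by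
    have h2 : ∀ i : ι, (x i) • (Pi.single i 1 : ι → ℝ) = Pi.single i (x i) := by
      intro i; rw [← Pi.single_smul, smul_eq_mul, mul_one]
    calc ∑ i, (x i) • (Pi.single i 1 : ι → ℝ) = ∑ i, Pi.single i (x i) :=
          Finset.sum_congr rfl fun i _ => h2 i
      _ = x := Finset.univ_sum_single x
  conv_lhs => rw [← hx]
  rw [map_sum]
  exact Finset.sum_congr rfl fun i _ => map_smul L _ _

theorem minimax_fin {V W : Type*} [NormedAddCommGroup V] [NormedSpace ℝ V] [FiniteDimensional ℝ V]
    [AddCommGroup W] [Module ℝ W] {ι : Type*} [Fintype ι] [DecidableEq ι]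
    (A : Set V) (hAne : A.Nonempty) (hAcomp : IsCompact A) (hAconv : Convex ℝ A)
    (B : Set W) (hBconv : Convex ℝ B)
    (φ : V → W → ℝ)
    (hφ1 : ∀ b : W, ∃ L : V →ₗ[ℝ] ℝ, ∀ a, φ a b = L a + φ 0 b)
    (hφ2 : ∀ a : V, ∃ L : W →ₗ[ℝ] ℝ, ∀ b, φ a b = L b + φ a 0)
    (h : ∀ b ∈ B, ∃ a ∈ A, φ a b ≤ 0)
    (b : ι → W) (hb : ∀ i, b i ∈ B) :
    ∃ a ∈ A, ∀ i, φ a (b i) ≤ 0 := by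
  by_contra hcon
  push_neg at hcon
  -- the affine map F
  choose L1 hL1 using hφ1
  set M : V →ₗ[ℝ] (ι → ℝ) := LinearMap.pi (fun i => L1 (b i)) with hM
  set c : ι → ℝ := fun i => φ 0 (b i) with hc
  set F : V → ι → ℝ := fun a i => φ a (b i) with hF
  have hFeq : ∀ a, F a = M a + c := by
    intro a; funext i
    simp only [hF, hM, hc, LinearMap.pi_apply, Pi.add_apply]
    exact hL1 (b i) a
  set K : Set (ι → ℝ) := F '' A with hK
  have hKeq : K = (fun y => y + c) '' (M '' A) := by
    rw [hK, Set.image_image]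
    exact Set.image_congr fun a _ => hFeq a
  have hKconv : Convex ℝ K := by
    rw [hKeq]
    have h1 : Convex ℝ (M '' A) := hAconv.linear_image M
    have : (fun y : ι → ℝ => y + c) '' (M '' A) = (fun y => c + y) '' (M '' A) := by
      apply Set.image_congr; intro y _; exact add_comm y c
    rw [this]
    exact h1.translate c
  have hKcomp : IsCompact K := by
    rw [hKeq]
    exact ((hAcomp.image M.continuous_of_finiteDimensional).image
      (continuous_id.add continuous_const))
  set O : Set (ι → ℝ) := {x | ∀ i, x i ≤ 0} with hO
  have hOclosed : IsClosed O := by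
    have : O = ⋂ i, {x : ι → ℝ | x i ≤ 0} := by
      ext x; simp [hO]
    rw [this]
    exact isClosed_iInter fun i => isClosed_le (continuous_apply i) continuous_const
  have hOconv : Convex ℝ O := by
    have : O = ⋂ i, {x : ι → ℝ | x i ≤ 0} := by
      ext x; simp [hO]
    rw [this]
    refine convex_iInter fun i => ?_
    exact convex_halfSpace_le ⟨fun x y => rfl, fun c x => rfl⟩ 0
  have hdisj : Disjoint K O := by
    rw [Set.disjoint_left]
    rintro y ⟨a, ha, rfl⟩ hyO
    obtain ⟨i, hi⟩ := hcon a ha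
    exact absurd (hyO i) (not_le.2 hi)
  obtain ⟨f, u, v, hfu, huv, hfv⟩ :=
    geometric_hahn_banach_compact_closed hKconv hKcomp hOconv hOclosed hdisj
  have hvneg : v < 0 := by
    have h0 : (0 : ι → ℝ) ∈ O := fun i => le_refl 0
    have := hfv 0 h0
    simpa using this
  have hfO : ∀ z ∈ O, 0 ≤ f z := by
    intro z hz
    by_contra hfz
    push_neg at hfz
    have hl : (0:ℝ) ≤ (v - 1) / f z := by
      rw [← neg_div_neg_eq]
      exact div_nonneg (by linarith) (by linarith)
    have hmem : ((v - 1) / f z) • z ∈ O := by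
      intro i
      exact mul_nonpos_of_nonneg_of_nonpos hl (hz i)
    have := hfv _ hmem
    rw [map_smul, smul_eq_mul, div_mul_cancel₀ _ (ne_of_lt hfz)] at this
    linarith
  set lam : ι → ℝ := fun i => - f (Pi.single i 1) with hlam
  have hlamnn : ∀ i, 0 ≤ lam i := by
    intro i
    have hmem : (-(Pi.single i 1) : ι → ℝ) ∈ O := by
      intro j
      simp only [Pi.neg_apply, neg_nonpos]
      by_cases hij : j = i
      · subst hij; simp
      · rw [Pi.single_eq_of_ne hij]
    have := hfO _ hmem
    rw [map_neg] at this
    simpa [hlam] using this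
  have hfexp : ∀ y : ι → ℝ, f y = ∑ i, y i * f (Pi.single i 1) := by
    intro y
    have := pi_expand' (f : (ι → ℝ) →ₗ[ℝ] ℝ) y
    simpa [smul_eq_mul] using this
  have hpos : ∀ a ∈ A, 0 < ∑ i, lam i * φ a (b i) := by
    intro a ha
    have h1 : f (F a) < u := hfu _ ⟨a, ha, rfl⟩
    have h2 : f (F a) = ∑ i, φ a (b i) * f (Pi.single i 1) := hfexp (F a)
    have h3 : ∑ i, lam i * φ a (b i) = - ∑ i, φ a (b i) * f (Pi.single i 1) := by
      rw [← Finset.sum_neg_distrib]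
      exact Finset.sum_congr rfl fun i _ => by rw [hlam]; ring
    rw [h3, ← h2]
    linarith
  set s : ℝ := ∑ i, lam i with hs
  have hsnn : 0 ≤ s := Finset.sum_nonneg fun i _ => hlamnn i
  have hspos : 0 < s := by
    rcases lt_or_eq_of_le hsnn with h' | h'
    · exact h'
    · exfalso
      obtain ⟨a, ha⟩ := hAne
      have hzero : ∀ i ∈ Finset.univ, lam i = 0 :=
        (Finset.sum_eq_zero_iff_of_nonneg (fun i _ => hlamnn i)).1 h'.symm
      have := hpos a ha
      rw [Finset.sum_eq_zero (fun i hi => by rw [hzero i hi, zero_mul])] at this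
      exact lt_irrefl 0 this
  set bbar : W := ∑ i, (lam i / s) • b i with hbbar
  have hsum1 : ∑ i, lam i / s = 1 := by
    rw [← Finset.sum_div, ← hs, div_self hspos.ne']
  have hbbarB : bbar ∈ B :=
    hBconv.sum_mem (fun i _ => div_nonneg (hlamnn i) hsnn) hsum1 (fun i _ => hb i)
  have hphibar : ∀ a, φ a bbar = ∑ i, (lam i / s) * φ a (b i) := by
    intro a
    obtain ⟨L2, hL2⟩ := hφ2 a
    rw [hL2, hbbar, map_sum]
    have : ∀ i : ι, L2 ((lam i / s) • b i) = (lam i / s) * L2 (b i) := fun i => by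
      rw [map_smul, smul_eq_mul]
    rw [Finset.sum_congr rfl fun i _ => this i]
    have hrhs : ∀ i : ι, (lam i / s) * φ a (b i) = (lam i / s) * L2 (b i) + (lam i / s) * φ a 0 := by
      intro i; rw [hL2 (b i)]; ring
    rw [Finset.sum_congr rfl fun i _ => hrhs i, Finset.sum_add_distrib, ← Finset.sum_mul, hsum1]
    ring
  obtain ⟨a, ha, hphile⟩ := h bbar hbbarB
  have := hpos a ha
  rw [hphibar a] at hphile
  have heq : ∑ i, (lam i / s) * φ a (b i) = (∑ i, lam i * φ a (b i)) / s := by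
    rw [Finset.sum_div]
    exact Finset.sum_congr rfl fun i _ => by ring
  rw [heq] at hphile
  have := div_pos this hspos
  linarith

theorem minimax_aux {V W : Type*} [NormedAddCommGroup V] [NormedSpace ℝ V] [FiniteDimensional ℝ V]
    [AddCommGroup W] [Module ℝ W]
    (A : Set V) (hAne : A.Nonempty) (hAcomp : IsCompact A) (hAconv : Convex ℝ A)
    (B : Set W) (hBconv : Convex ℝ B)
    (φ : V → W → ℝ)
    (hφ1 : ∀ b : W, ∃ L : V →ₗ[ℝ] ℝ, ∀ a, φ a b = L a + φ 0 b)
    (hφ2 : ∀ a : V, ∃ L : W →ₗ[ℝ] ℝ, ∀ b, φ a b = L b + φ a 0)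
    (h : ∀ b ∈ B, ∃ a ∈ A, φ a b ≤ 0) :
    ∃ a ∈ A, ∀ b ∈ B, φ a b ≤ 0 := by
  classical
  set T : B → Set V := fun b => {a | φ a (b : W) ≤ 0} with hT
  have hTclosed : ∀ b : B, IsClosed (T b) := by
    intro b
    obtain ⟨L, hL⟩ := hφ1 (b : W)
    have hcont : Continuous fun a => φ a (b : W) := by
      have : (fun a => φ a (b : W)) = fun a => L a + φ 0 (b : W) := funext fun a => hL a
      rw [this]
      exact L.continuous_of_finiteDimensional.add continuous_const
    exact isClosed_le hcont continuous_const
  have hne : (A ∩ ⋂ b : B, T b).Nonempty := by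
    by_contra hcon
    rw [Set.not_nonempty_iff_eq_empty] at hcon
    obtain ⟨u, hu⟩ := hAcomp.elim_finite_subfamily_closed T hTclosed hcon
    -- apply the finite case with index type ↥u
    have hfin := minimax_fin (ι := {x // x ∈ u}) A hAne hAcomp hAconv B hBconv φ hφ1 hφ2 h
      (fun i => ((i : B) : W)) (fun i => (i : B).2)
    obtain ⟨a, ha, hall⟩ := hfin
    have : a ∈ A ∩ ⋂ b ∈ u, T b := by
      refine ⟨ha, ?_⟩
      rw [Set.mem_iInter₂]
      intro b hbu
      exact hall ⟨b, hbu⟩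
    rw [hu] at this
    exact this
  obtain ⟨a, haA, haT⟩ := hne
  refine ⟨a, haA, fun b hb => ?_⟩
  have := Set.mem_iInter.1 haT ⟨b, hb⟩
  exact this

section helpers

theorem small_step (X c : ℝ) (hc : 0 ≤ c)
    (h : ∀ θ : ℝ, 0 < θ → θ ≤ 1 → 0 ≤ 2 * X + θ * c) : 0 ≤ X := by
  by_contra hX
  push_neg at hX
  rcases eq_or_lt_of_le hc with hc0 | hc0
  · have := h 1 one_pos le_rfl
    nlinarith
  · have hθpos : 0 < min 1 (-X / c) := lt_min one_pos (div_pos (by linarith) hc0)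
    have hθle : min 1 (-X / c) ≤ 1 := min_le_left _ _
    have := h _ hθpos hθle
    have h2 : min 1 (-X / c) * c ≤ (-X / c) * c :=
      mul_le_mul_of_nonneg_right (min_le_right _ _) hc0.le
    rw [div_mul_cancel₀ _ hc0.ne'] at h2
    linarith

end helpers

open Finset

set_option maxHeartbeats 1000000

/-- Blackwell's dual condition: for a bi-affine outcome function `g`, a compact
convex set `A`, a convex set `B` and a nonempty closed convex cone `C`,
Blackwell's (primal) condition with respect to any family of dot products is
equivalent to: for every `b ∈ B` there exists `a ∈ A` with `g a b ∈ C`.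
In particular it does not depend on the sequence of dot products. -/
theorem blackwell_dual_condition
    {V W : Type*} [NormedAddCommGroup V] [NormedSpace ℝ V] [FiniteDimensional ℝ V]
    [NormedAddCommGroup W] [NormedSpace ℝ W] [FiniteDimensional ℝ W]
    (d : ℕ) (hd : 1 ≤ d)
    (A : Set V) (hAne : A.Nonempty) (hAcomp : IsCompact A) (hAconv : Convex ℝ A)
    (B : Set W) (hBne : B.Nonempty) (hBconv : Convex ℝ B)
    (g : V → W → Fin d → ℝ)
    (hgaff₁ : ∀ (b : W) (a a' : V) (θ : ℝ),
      g ((1 - θ) • a + θ • a') b = (1 - θ) • g a b + θ • g a' b)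
    (hgaff₂ : ∀ (a : V) (b b' : W) (θ : ℝ),
      g a ((1 - θ) • b + θ • b') = (1 - θ) • g a b + θ • g a b')
    (C : Set (Fin d → ℝ)) (hCne : C.Nonempty) (hCclosed : IsClosed C)
    (hCadd : ∀ z ∈ C, ∀ z' ∈ C, z + z' ∈ C)
    (hCsmul : ∀ z ∈ C, ∀ l : ℝ, 0 ≤ l → l • z ∈ C)
    -- the time-dependent dot products
    (inn : ℕ → (Fin d → ℝ) → (Fin d → ℝ) → ℝ)
    (hsymm : ∀ t ≥ 1, ∀ u v, inn t u v = inn t v u)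
    (haddl : ∀ t ≥ 1, ∀ u u' v, inn t (u + u') v = inn t u v + inn t u' v)
    (hsmul : ∀ t ≥ 1, ∀ (c : ℝ) (u v), inn t (c • u) v = c * inn t u v)
    (hposdef : ∀ t ≥ 1, ∀ u, u ≠ 0 → 0 < inn t u u) :
    -- (1) Blackwell's condition (`p` is the `(t)`-projection of `R` onto `C`)
    (∀ t ≥ 1, ∀ R : Fin d → ℝ, ∀ p ∈ C,
        (∀ q ∈ C, inn t (R - p) (R - p) ≤ inn t (R - q) (R - q)) →
        ∃ a ∈ A, ∀ b ∈ B, inn t (g a b) (R - p) ≤ 0) ↔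
    -- (2) the dual condition
    (∀ b ∈ B, ∃ a ∈ A, g a b ∈ C) := by
  -- basic facts about the dot products
  have hzero : ∀ t, 1 ≤ t → ∀ v, inn t (0 : Fin d → ℝ) v = 0 := by
    intro t ht v
    have := hsmul t ht 0 v v
    simpa using this
  have hnn : ∀ t, 1 ≤ t → ∀ u, 0 ≤ inn t u u := by
    intro t ht u
    rcases eq_or_ne u 0 with rfl | hu
    · rw [hzero t ht]
    · exact (hposdef t ht u hu).le
  have haddr : ∀ t, 1 ≤ t → ∀ u v v' : Fin d → ℝ,
      inn t u (v + v') = inn t u v + inn t u v' := by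
    intro t ht u v v'
    rw [hsymm t ht, haddl t ht, hsymm t ht v u, hsymm t ht v' u]
  have hsmulr : ∀ t, 1 ≤ t → ∀ (c : ℝ) (u v : Fin d → ℝ),
      inn t u (c • v) = c * inn t u v := by
    intro t ht c u v
    rw [hsymm t ht, hsmul t ht, hsymm t ht v u]
  have hexp : ∀ t, 1 ≤ t → ∀ x y : Fin d → ℝ,
      inn t (x + y) (x + y) = inn t x x + 2 * inn t x y + inn t y y := by
    intro t ht x y
    rw [haddl t ht, haddr t ht, haddr t ht, hsymm t ht y x]; ring
  -- the projection inequality for the cone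
  have hproj : ∀ t, 1 ≤ t → ∀ R p : Fin d → ℝ, p ∈ C →
      (∀ q ∈ C, inn t (R - p) (R - p) ≤ inn t (R - q) (R - q)) →
      ∀ q ∈ C, inn t q (R - p) ≤ 0 := by
    intro t ht R p hp hmin q hq
    have key : ∀ θ : ℝ, 0 < θ → θ ≤ 1 →
        0 ≤ 2 * (- inn t q (R - p)) + θ * inn t q q := by
      intro θ hθ hθ1
      have hqC : p + θ • q ∈ C := hCadd p hp _ (hCsmul q hq θ hθ.le)
      have h1 := hmin _ hqC
      have e : R - (p + θ • q) = (R - p) + (-θ) • q := by module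
      rw [e, hexp t ht] at h1
      have e2 : inn t (R - p) ((-θ) • q) = -θ * inn t (R - p) q := hsmulr t ht _ _ _
      have e3 : inn t ((-θ) • q) ((-θ) • q) = θ ^ 2 * inn t q q := by
        rw [hsmul t ht, hsmulr t ht]; ring
      have e4 : inn t (R - p) q = inn t q (R - p) := hsymm t ht _ _
      rw [e2, e3, e4] at h1
      nlinarith [h1, hθ]
    have := small_step _ _ (hnn t ht q) key
    linarith
  constructor
  · -- Blackwell's condition implies the dual condition
    intro hbl b hb
    -- the bilinear map `inn 1` and the quadratic form `N`
    set f2 : (Fin d → ℝ) →ₗ[ℝ] (Fin d → ℝ) →ₗ[ℝ] ℝ :=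
      LinearMap.mk₂ ℝ (inn 1) (fun m₁ m₂ n => haddl 1 le_rfl m₁ m₂ n)
        (fun c m n => by rw [smul_eq_mul]; exact hsmul 1 le_rfl c m n)
        (fun m n₁ n₂ => haddr 1 le_rfl m n₁ n₂)
        (fun c m n => by rw [smul_eq_mul]; exact hsmulr 1 le_rfl c m n) with hf2
    have hNcont : Continuous (fun x : Fin d → ℝ => inn 1 x x) := by
      have h1 : Continuous (fun p : (Fin d → ℝ) × (Fin d → ℝ) => f2 p.1 p.2) := bilin_cont f2
      exact h1.comp (continuous_id.prodMk continuous_id)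
    have hNhom : ∀ (c : ℝ) (x : Fin d → ℝ), inn 1 (c • x) (c • x) = c ^ 2 * inn 1 x x := by
      intro c x
      rw [hsmul 1 le_rfl, hsmulr 1 le_rfl]; ring
    obtain ⟨ε, hε, hco⟩ := quad_coercive hd (fun x => inn 1 x x) hNcont
      (fun x hx => hposdef 1 le_rfl x hx) hNhom
    have hco' : ∀ x : Fin d → ℝ, ε * ‖x‖ ^ 2 ≤ inn 1 x x := hco
    -- continuity and boundedness of `a ↦ g a b`
    obtain ⟨Lb, hLb⟩ := aff_decomp (fun a => g a b) (fun a a' θ => hgaff₁ b a a' θ)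
    have hgcont : Continuous (fun a => g a b) := by
      have he : (fun a => g a b) = fun a => Lb a + g 0 b := funext hLb
      rw [he]
      exact Lb.continuous_of_finiteDimensional.add continuous_const
    obtain ⟨amax, hamax, hmax⟩ := hAcomp.exists_isMaxOn hAne
      ((continuous_norm.comp hgcont)).continuousOn
    set G := ‖g amax b‖ with hG
    have hGnn : (0:ℝ) ≤ G := norm_nonneg _
    have hGbd : ∀ a ∈ A, ‖g a b‖ ≤ G := fun a ha => isMaxOn_iff.1 hmax a ha
    obtain ⟨c₀, hc₀⟩ := hCne
    obtain ⟨a₀, ha₀⟩ := hAne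
    set M := inn 1 (g a₀ b - c₀) (g a₀ b - c₀) with hM
    have hMnn : 0 ≤ M := hnn 1 le_rfl _
    set ρ := G + Real.sqrt (M / ε) + 1 + ‖c₀‖ with hρ
    have hsq : 0 ≤ Real.sqrt (M / ε) := Real.sqrt_nonneg _
    have hkey : ∀ a ∈ A, ∀ q : Fin d → ℝ, ρ < ‖q‖ → M < inn 1 (g a b - q) (g a b - q) := by
      intro a ha q hq
      rw [hρ] at hq
      have h1 : ‖q‖ - G ≤ ‖g a b - q‖ := by
        have h2 := norm_sub_norm_le q (g a b)
        have h3 := hGbd a ha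
        rw [norm_sub_rev]
        linarith
      have h4 : Real.sqrt (M / ε) ^ 2 < ‖g a b - q‖ ^ 2 := by
        apply sq_lt_sq'
        · linarith [norm_nonneg c₀]
        · linarith [norm_nonneg c₀]
      rw [Real.sq_sqrt (div_nonneg hMnn hε.le)] at h4
      have h5 : M < ε * ‖g a b - q‖ ^ 2 := by
        have h6 : ε * (M / ε) < ε * ‖g a b - q‖ ^ 2 := (mul_lt_mul_iff_right₀ hε).2 h4
        rw [mul_div_cancel₀ _ hε.ne'] at h6
        exact h6
      exact lt_of_lt_of_le h5 (hco' _)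
    -- a compact slice of the cone
    set C' := C ∩ Metric.closedBall (0 : Fin d → ℝ) ρ with hC'
    have hC'comp : IsCompact C' := (isCompact_closedBall _ _).inter_left hCclosed
    have hc₀' : c₀ ∈ C' := by
      refine ⟨hc₀, ?_⟩
      rw [Metric.mem_closedBall, dist_zero_right, hρ]
      linarith
    set S := A ×ˢ C' with hS
    have hScomp : IsCompact S := hAcomp.prod hC'comp
    have hSne : S.Nonempty := ⟨(a₀, c₀), Set.mk_mem_prod ha₀ hc₀'⟩
    have hψcont : Continuous (fun z : V × (Fin d → ℝ) => inn 1 (g z.1 b - z.2) (g z.1 b - z.2)) :=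
      hNcont.comp ((hgcont.comp continuous_fst).sub continuous_snd)
    obtain ⟨z, hmemS, hminS⟩ := hScomp.exists_isMinOn hSne hψcont.continuousOn
    obtain ⟨astar, p⟩ := z
    have hastar : astar ∈ A := hmemS.1
    have hpC : p ∈ C := hmemS.2.1
    have hminS' : ∀ w ∈ S, inn 1 (g astar b - p) (g astar b - p) ≤ inn 1 (g w.1 b - w.2) (g w.1 b - w.2) :=
      fun w hw => isMinOn_iff.1 hminS w hw
    set Rs := g astar b with hRs
    -- the pair (astar, p) is a global joint minimizer over A × C
    have hjoint : ∀ a ∈ A, ∀ q ∈ C,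
        inn 1 (Rs - p) (Rs - p) ≤ inn 1 (g a b - q) (g a b - q) := by
      intro a ha q hq
      by_cases hqb : ‖q‖ ≤ ρ
      · exact hminS' (a, q) (Set.mk_mem_prod ha ⟨hq, by rwa [Metric.mem_closedBall, dist_zero_right]⟩)
      · push_neg at hqb
        have h1 := hminS' (a₀, c₀) (Set.mk_mem_prod ha₀ hc₀')
        have h2 := hkey a ha q hqb
        simp only at h1
        rw [← hM] at h1
        linarith
    have hminC : ∀ q ∈ C, inn 1 (Rs - p) (Rs - p) ≤ inn 1 (Rs - q) (Rs - q) :=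
      fun q hq => hjoint astar hastar q hq
    obtain ⟨a1, ha1, h1⟩ := hbl 1 le_rfl Rs p hpC hminC
    have hX : inn 1 (g a1 b) (Rs - p) ≤ 0 := h1 b hb
    -- first variation in the cone direction
    have hclaim1 : 0 ≤ inn 1 (Rs - p) p := by
      apply small_step _ (inn 1 p p) (hnn 1 le_rfl p)
      intro θ hθ hθ1
      have hqC : (1 - θ) • p ∈ C := hCsmul p hpC _ (by linarith)
      have h2 := hminC _ hqC
      have e : Rs - (1 - θ) • p = (Rs - p) + θ • p := by module
      rw [e, hexp 1 le_rfl, hsmulr 1 le_rfl] at h2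
      have e3 : inn 1 (θ • p) (θ • p) = θ ^ 2 * inn 1 p p := by
        rw [hsmul 1 le_rfl, hsmulr 1 le_rfl]; ring
      rw [e3] at h2
      nlinarith [h2, hθ]
    -- first variation in the A direction
    have hclaim2 : 0 ≤ inn 1 (Rs - p) (g a1 b - Rs) := by
      apply small_step _ (inn 1 (g a1 b - Rs) (g a1 b - Rs)) (hnn 1 le_rfl _)
      intro θ hθ hθ1
      have haθ : (1 - θ) • astar + θ • a1 ∈ A :=
        hAconv hastar ha1 (by linarith) hθ.le (by ring)
      have h2 := hjoint _ haθ p hpC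
      have e : g ((1 - θ) • astar + θ • a1) b - p = (Rs - p) + θ • (g a1 b - Rs) := by
        rw [hgaff₁]; rw [← hRs]; module
      rw [e, hexp 1 le_rfl, hsmulr 1 le_rfl] at h2
      have e3 : inn 1 (θ • (g a1 b - Rs)) (θ • (g a1 b - Rs))
          = θ ^ 2 * inn 1 (g a1 b - Rs) (g a1 b - Rs) := by
        rw [hsmul 1 le_rfl, hsmulr 1 le_rfl]; ring
      rw [e3] at h2
      nlinarith [h2, hθ]
    -- conclude that Rs = p ∈ C
    have hsplit : inn 1 (Rs - p) (g a1 b)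
        = inn 1 (Rs - p) (g a1 b - Rs) + (inn 1 (Rs - p) (Rs - p) + inn 1 (Rs - p) p) := by
      have e : g a1 b = (g a1 b - Rs) + ((Rs - p) + p) := by module
      conv_lhs => rw [e]
      rw [haddr 1 le_rfl, haddr 1 le_rfl]
    have hXsym : inn 1 (Rs - p) (g a1 b) = inn 1 (g a1 b) (Rs - p) := hsymm 1 le_rfl _ _
    have hQ0 : inn 1 (Rs - p) (Rs - p) = 0 := by
      have hle : inn 1 (Rs - p) (Rs - p) ≤ 0 := by linarith
      exact le_antisymm hle (hnn 1 le_rfl _)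
    have hRp : Rs = p := by
      by_contra hne
      have hne' : Rs - p ≠ 0 := fun h => hne (by rwa [sub_eq_zero] at h)
      exact absurd hQ0 (ne_of_gt (hposdef 1 le_rfl _ hne'))
    exact ⟨astar, hastar, by rw [← hRs, hRp]; exact hpC⟩
  · -- the dual condition implies Blackwell's condition
    intro hdual t ht R p hp hmin
    have hconeIneq : ∀ q ∈ C, inn t q (R - p) ≤ 0 := hproj t ht R p hp hmin
    have hφ1 : ∀ b : W, ∃ L : V →ₗ[ℝ] ℝ,
        ∀ a, inn t (g a b) (R - p) = L a + inn t (g 0 b) (R - p) := by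
      intro b
      obtain ⟨L, hL⟩ := aff_decomp (fun a => g a b) (fun a a' θ => hgaff₁ b a a' θ)
      refine ⟨⟨⟨fun a => inn t (L a) (R - p), ?_⟩, ?_⟩, ?_⟩
      · intro a a'
        simp only [map_add]
        rw [haddl t ht]
      · intro c a
        simp only [map_smul, RingHom.id_apply, smul_eq_mul]
        rw [hsmul t ht]
      · intro a
        simp only [LinearMap.coe_mk, AddHom.coe_mk]
        rw [hL a, haddl t ht]
    have hφ2 : ∀ a : V, ∃ L : W →ₗ[ℝ] ℝ,
        ∀ b, inn t (g a b) (R - p) = L b + inn t (g a 0) (R - p) := by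
      intro a
      obtain ⟨L, hL⟩ := aff_decomp (fun b => g a b) (fun b b' θ => hgaff₂ a b b' θ)
      refine ⟨⟨⟨fun b => inn t (L b) (R - p), ?_⟩, ?_⟩, ?_⟩
      · intro b b'
        simp only [map_add]
        rw [haddl t ht]
      · intro c b
        simp only [map_smul, RingHom.id_apply, smul_eq_mul]
        rw [hsmul t ht]
      · intro b
        simp only [LinearMap.coe_mk, AddHom.coe_mk]
        rw [hL b, haddl t ht]
    have h : ∀ b ∈ B, ∃ a ∈ A, inn t (g a b) (R - p) ≤ 0 := by
      intro b hb
      obtain ⟨a, ha, hgC⟩ := hdual b hb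
      exact ⟨a, ha, hconeIneq _ hgC⟩
    exact minimax_aux A hAne hAcomp hAconv B hBconv (fun a b => inn t (g a b) (R - p))
      hφ1 hφ2 h
end

section
/- Let α ≥ 0, λ_t ∈ (0,1], λ ∈ (0,1], and R = (R^(1), R^(2)) ∈ ℝ². Set R̃ = (max(0, R^(1)), max(0, R^(2))), define x = 0 if R̃ = (0,0) and x = λ_t²·R̃^(2) / (R̃^(1) + λ_t²·λ^{-1}·R̃^(2)) otherwise, and define g_{α,λ}(x,j) = α(1−2j)·(x, λ^{-1}x − 1) ∈ ℝ². Then for every j ∈ {0,1}, ⟨g_{α,λ}(x,j), R̃⟩_(t) ≤ 0, where ⟨u,v⟩_(t) = u^(1)v^(1) + λ_t²·u^(2)v^(2). Consequently the negative orthant ℝ₋² satisfies Blackwell's condition for the family of outcome functions {g_{α,λ} : α ≥ 0, λ ∈ (0,1]} and these dot products. -/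
/-- Blackwell's condition for the auxiliary approachability problem of the Big
Match: with the oracle action `x`, for every `j ∈ {0,1}`, the outcome vector
`g_{α,λ}(x,j) = α(1−2j)·(x, λ⁻¹x − 1)` has nonpositive dot product
`⟨·, R̃⟩_(t) = ·¹·R̃¹ + λ_t²·(·²)·R̃²` with the projection residual
`R̃ = (max 0 R¹, max 0 R²)`.  Hence the negative orthant `ℝ₋²` satisfies
Blackwell's condition for the outcome functions `g_{α,λ}` and these dot
products. -/
theorem big_match_blackwell_condition
    (α : ℝ) (hα : 0 ≤ α)
    (lt l : ℝ) (hlt : lt ∈ Set.Ioc (0 : ℝ) 1) (hl : l ∈ Set.Ioc (0 : ℝ) 1)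
    (R : ℝ × ℝ) (Rt : ℝ × ℝ) (hRt : Rt = (max 0 R.1, max 0 R.2))
    (x : ℝ)
    (hx : x = if Rt = (0, 0) then 0
        else lt ^ 2 * Rt.2 / (Rt.1 + lt ^ 2 * l⁻¹ * Rt.2)) :
    ∀ j : ℝ, j = 0 ∨ j = 1 →
      (α * (1 - 2 * j) * x) * Rt.1 +
        lt ^ 2 * (α * (1 - 2 * j) * (l⁻¹ * x - 1)) * Rt.2 ≤ 0 := by
  intro j hj
  have ha : 0 ≤ Rt.1 := by rw [hRt]; exact le_max_left _ _
  have hb : 0 ≤ Rt.2 := by rw [hRt]; exact le_max_left _ _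
  have hlt0 : 0 < lt := hlt.1
  have hl0 : 0 < l := hl.1
  by_cases h0 : Rt = (0, 0)
  · rw [hx, if_pos h0, h0]
    simp
  · rw [hx, if_neg h0]
    have hDpos : 0 < Rt.1 + lt ^ 2 * l⁻¹ * Rt.2 := by
      rcases lt_or_eq_of_le ha with ha' | ha'
      · have : 0 ≤ lt ^ 2 * l⁻¹ * Rt.2 := by positivity
        linarith
      · have hb' : 0 < Rt.2 := by
          rcases lt_or_eq_of_le hb with hb' | hb'
          · exact hb'
          · exact absurd (Prod.ext ha'.symm hb'.symm) h0
        have : 0 < lt ^ 2 * l⁻¹ * Rt.2 := by positivity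
        linarith
    have key : (lt ^ 2 * Rt.2 / (Rt.1 + lt ^ 2 * l⁻¹ * Rt.2)) *
        (Rt.1 + lt ^ 2 * l⁻¹ * Rt.2) = lt ^ 2 * Rt.2 :=
      div_mul_cancel₀ _ hDpos.ne'
    have heq : (α * (1 - 2 * j) * (lt ^ 2 * Rt.2 / (Rt.1 + lt ^ 2 * l⁻¹ * Rt.2))) * Rt.1 +
        lt ^ 2 * (α * (1 - 2 * j) *
          (l⁻¹ * (lt ^ 2 * Rt.2 / (Rt.1 + lt ^ 2 * l⁻¹ * Rt.2)) - 1)) * Rt.2 = 0 := by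
      linear_combination (α * (1 - 2 * j)) * key
    linarith
end

section
/- Fix ε ∈ (0,1] and set λ_t = ε·t^{-3/4} for t ≥ 1. Given a sequence (j_t)_{t≥1} with j_t ∈ {0,1}, define sequences (x_t)_{t≥1} and (α_t)_{t≥1} recursively by: α_t = ∏_{s=1}^{t-1}(1 − x_s) (so α_1 = 1); R¹_{t-1} = max(0, ∑_{s=1}^{t-1} α_s x_s (1 − 2j_s)) and R²_{t-1} = max(0, ∑_{s=1}^{t-1} α_s (λ_s^{-1} x_s − 1)(1 − 2j_s)); and x_t = 0 if (R¹_{t-1}, R²_{t-1}) = (0,0), and x_t = λ_t²·R²_{t-1} / (R¹_{t-1} + λ_t·R²_{t-1}) otherwise. Then for every T ≥ ε^{-8}: (1/T)·∑_{t=1}^T ∑_{s=1}^{t-1} α_s x_s (2j_s − 1) + (1/T)·∑_{t=1}^T α_t (2x_t − 1)(2j_t − 1) ≥ −9ε. -/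
/-!
Player I runs Blackwell's approachability strategy for the vector payoff
`g = (α x b, α (x / λ - 1) b)`, `b = 1 - 2 j`, whose running sums `S₁, S₂` have positive parts
`R₁, R₂`. The mixing probability `x` makes every increment orthogonal to `(R₁, λ² R₂)`, so the
potential `R₁² + λ² R₂²` grows by at most `2 λ_t²` per stage and, since `∑ t^(-3/2) ≤ 3`, never
exceeds `6 ε²`. The `T`-stage payoff equals `-∑ S₁(t-1) - 2 S₁(T) + ∑ g₁(t) / λ_t - S₂(T)`, where
`S₁ ≤ 3 ε`, `S₂(T) ≤ 3 ε / λ_T`, the weighted sum is at least `-1 / λ_T` because `∑ α x ≤ 1`, and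
`1 / λ_T ≤ ε T` once `T ≥ ε⁻⁸`. This settles `ε ≤ 1/3`; for larger `ε` the trivial bound `-1` on
each current stage payoff suffices.
-/

open Finset Real

theorem inv_sqrt_add_one_pow_three_le {a : ℝ} (ha : 0 < a) :
    (√(a + 1) ^ 3)⁻¹ ≤ 2 / √a - 2 / √(a + 1) := by
  have hu : 0 < √a := sqrt_pos.2 ha
  have hv : 0 < √(a + 1) := sqrt_pos.2 (by linarith)
  have huv : √a ≤ √(a + 1) := sqrt_le_sqrt (by linarith)
  have hsq : √(a + 1) ^ 2 = √a ^ 2 + 1 := by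
    rw [sq_sqrt ha.le, sq_sqrt (by linarith)]
  have hcube : √a * √(a + 1) * (√(a + 1) + √a) ≤ 2 * √(a + 1) ^ 3 := by
    nlinarith [mul_le_mul_of_nonneg_left huv (by positivity : 0 ≤ √(a + 1) * (√(a + 1) + √a))]
  rw [div_sub_div _ _ hu.ne' hv.ne', inv_eq_one_div,
    div_le_div_iff₀ (by positivity) (by positivity)]
  have hconj : (√(a + 1) - √a) * (√(a + 1) + √a) = 1 := by linear_combination hsq
  linear_combination (-(√a * √(a + 1))) * hconj + mul_le_mul_of_nonneg_left hcube (sub_nonneg.2 huv)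

theorem sum_Icc_inv_sqrt_pow_three_le (t : ℕ) :
    ∑ s ∈ Icc 1 t, (√(s : ℝ) ^ 3)⁻¹ ≤ 3 - 2 / √t := by
  induction t with
  | zero => simp
  | succ n ih =>
    rw [sum_Icc_succ_top (by omega)]
    rcases Nat.eq_zero_or_pos n with rfl | hn
    · norm_num
    · have := inv_sqrt_add_one_pow_three_le (a := n) (by exact_mod_cast hn)
      push_cast
      linarith

theorem rpow_neg_three_quarters_sq {x : ℝ} (hx : 0 ≤ x) :
    (x ^ (-(3 : ℝ) / 4)) ^ 2 = (√x ^ 3)⁻¹ := by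
  rw [sqrt_eq_rpow, ← rpow_natCast, ← rpow_natCast, ← rpow_mul hx, ← rpow_mul hx, ← rpow_neg hx]
  norm_num

theorem sum_Icc_mul_prod_one_sub {R : Type*} [CommRing R] (x : ℕ → R) (t : ℕ) :
    ∑ s ∈ Icc 1 t, (∏ r ∈ Icc 1 (s - 1), (1 - x r)) * x s = 1 - ∏ s ∈ Icc 1 t, (1 - x s) := by
  rw [prod_one_sub_ordered, sub_sub_cancel]
  refine sum_congr rfl fun s hs => ?_
  rw [mul_comm]
  congr 2
  ext r
  simp only [mem_filter, mem_Icc] at hs ⊢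
  omega

theorem blackwell_potential_step {s₁ s₂ r₁ r₂ g₁ g₂ w : ℝ} (h₁ : s₁ ≤ r₁) (h₂ : s₂ ≤ r₂)
    (hw : 0 ≤ w) (horth : r₁ * g₁ + w * r₂ * g₂ = 0) :
    max 0 (s₁ + g₁) ^ 2 + w * max 0 (s₂ + g₂) ^ 2 ≤
      r₁ ^ 2 + w * r₂ ^ 2 + (g₁ ^ 2 + w * g₂ ^ 2) := by
  have key {s r g : ℝ} (h : s ≤ r) : max 0 (s + g) ^ 2 ≤ (r + g) ^ 2 := by
    rw [← sq_abs (r + g)]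
    exact pow_le_pow_left₀ (le_max_left _ _)
      (max_le (abs_nonneg _) ((by linarith : s + g ≤ r + g).trans (le_abs_self _))) 2
  calc max 0 (s₁ + g₁) ^ 2 + w * max 0 (s₂ + g₂) ^ 2
      ≤ (r₁ + g₁) ^ 2 + w * (r₂ + g₂) ^ 2 :=
        add_le_add (key h₁) (mul_le_mul_of_nonneg_left (key h₂) hw)
    _ = r₁ ^ 2 + w * r₂ ^ 2 + (g₁ ^ 2 + w * g₂ ^ 2) := by linear_combination 2 * horth

theorem blackwell_potential_le {lam g₁ g₂ R₁ R₂ : ℕ → ℝ}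
    (hR₁ : ∀ t, R₁ t = max 0 (∑ s ∈ Icc 1 t, g₁ s))
    (hR₂ : ∀ t, R₂ t = max 0 (∑ s ∈ Icc 1 t, g₂ s))
    (hlam : ∀ t, 1 ≤ t → lam (t + 1) ^ 2 ≤ lam t ^ 2)
    (hg₁ : ∀ t, 1 ≤ t → g₁ t ^ 2 ≤ lam t ^ 2) (hg₂ : ∀ t, 1 ≤ t → g₂ t ^ 2 ≤ 1)
    (horth : ∀ t, 1 ≤ t → R₁ (t - 1) * g₁ t + lam t ^ 2 * R₂ (t - 1) * g₂ t = 0) (t : ℕ) :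
    R₁ t ^ 2 + lam t ^ 2 * R₂ t ^ 2 ≤ 2 * ∑ s ∈ Icc 1 t, lam s ^ 2 := by
  induction t with
  | zero => simp [hR₁, hR₂]
  | succ n ih =>
    have hstep := blackwell_potential_step ((hR₁ n).symm ▸ le_max_right _ _)
      ((hR₂ n).symm ▸ le_max_right _ _) (sq_nonneg (lam (n + 1))) (horth (n + 1) (by omega))
    rw [← sum_Icc_succ_top (by omega), ← sum_Icc_succ_top (by omega), ← hR₁, ← hR₂,
      Nat.add_sub_cancel] at hstep
    have hdecay : lam (n + 1) ^ 2 * R₂ n ^ 2 ≤ lam n ^ 2 * R₂ n ^ 2 := by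
      rcases Nat.eq_zero_or_pos n with rfl | hn
      · simp [hR₂]
      · exact mul_le_mul_of_nonneg_right (hlam n hn) (sq_nonneg _)
    rw [sum_Icc_succ_top (by omega)]
    have := mul_le_mul_of_nonneg_left (hg₂ (n + 1) (by omega)) (sq_nonneg (lam (n + 1)))
    linarith [hg₁ (n + 1) (by omega)]

/-- Blackwell's mixing rule: with `x = blackwellMix l r₁ r₂`, the vector payoff
`(x b, (x / l - 1) b)` is orthogonal to `(r₁, l² r₂)` for either sign `b` of Player II's action. -/
noncomputable def blackwellMix (l r₁ r₂ : ℝ) : ℝ :=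
  if r₁ = 0 ∧ r₂ = 0 then 0 else l ^ 2 * r₂ / (r₁ + l * r₂)

section blackwellMix

variable {l r₁ r₂ : ℝ}

theorem blackwellMix_nonneg (hl : 0 ≤ l) (hr₁ : 0 ≤ r₁) (hr₂ : 0 ≤ r₂) :
    0 ≤ blackwellMix l r₁ r₂ := by
  unfold blackwellMix
  split_ifs <;> positivity

theorem add_mul_pos_of_not_both_zero (hl : 0 < l) (hr₁ : 0 ≤ r₁) (hr₂ : 0 ≤ r₂)
    (h : ¬(r₁ = 0 ∧ r₂ = 0)) : 0 < r₁ + l * r₂ := by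
  rcases hr₁.lt_or_eq with h₁ | rfl
  · positivity
  · have := mul_pos hl (hr₂.lt_of_ne fun h₂ => h ⟨rfl, h₂.symm⟩)
    linarith

theorem blackwellMix_le (hl : 0 < l) (hr₁ : 0 ≤ r₁) (hr₂ : 0 ≤ r₂) :
    blackwellMix l r₁ r₂ ≤ l := by
  unfold blackwellMix
  split_ifs with h
  · exact hl.le
  · rw [div_le_iff₀ (add_mul_pos_of_not_both_zero hl hr₁ hr₂ h)]
    nlinarith

theorem blackwellMix_orthogonal (hl : 0 < l) (hr₁ : 0 ≤ r₁) (hr₂ : 0 ≤ r₂) :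
    r₁ * blackwellMix l r₁ r₂ + l ^ 2 * r₂ * (l⁻¹ * blackwellMix l r₁ r₂ - 1) = 0 := by
  unfold blackwellMix
  split_ifs with h
  · simp [h.1, h.2]
  · field_simp [(add_mul_pos_of_not_both_zero hl hr₁ hr₂ h).ne']
    ring

end blackwellMix

/-- `x t` is Player I's probability of the absorbing action at stage `t`, `α t` the probability
that play is not yet absorbed at stage `t`, and `j t` Player II's action. -/
structure IsBlackwellPlay (ε : ℝ) (lam j x α R₁ R₂ : ℕ → ℝ) : Prop where
  ε_pos : 0 < ε
  ε_le_one : ε ≤ 1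
  lam_eq : ∀ t, 1 ≤ t → lam t = ε * (t : ℝ) ^ (-(3 : ℝ) / 4)
  j_eq : ∀ t, j t = 0 ∨ j t = 1
  α_eq : ∀ t, α t = ∏ s ∈ Icc 1 (t - 1), (1 - x s)
  R₁_eq : ∀ t, R₁ t = max 0 (∑ s ∈ Icc 1 t, α s * x s * (1 - 2 * j s))
  R₂_eq : ∀ t, R₂ t = max 0 (∑ s ∈ Icc 1 t, α s * ((lam s)⁻¹ * x s - 1) * (1 - 2 * j s))
  x_eq : ∀ t, 1 ≤ t → x t = blackwellMix (lam t) (R₁ (t - 1)) (R₂ (t - 1))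

namespace IsBlackwellPlay

variable {ε : ℝ} {lam j x α R₁ R₂ : ℕ → ℝ} {s t : ℕ}

theorem lam_pos (h : IsBlackwellPlay ε lam j x α R₁ R₂) (ht : 1 ≤ t) : 0 < lam t := by
  rw [h.lam_eq t ht]
  have := h.ε_pos
  positivity

theorem lam_le_one (h : IsBlackwellPlay ε lam j x α R₁ R₂) (ht : 1 ≤ t) : lam t ≤ 1 := by
  rw [h.lam_eq t ht]
  exact mul_le_one₀ h.ε_le_one (by positivity)
    (rpow_le_one_of_one_le_of_nonpos (by exact_mod_cast ht) (by norm_num))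

theorem lam_anti (h : IsBlackwellPlay ε lam j x α R₁ R₂) (hs : 1 ≤ s) (hst : s ≤ t) :
    lam t ≤ lam s := by
  rw [h.lam_eq s hs, h.lam_eq t (hs.trans hst)]
  exact mul_le_mul_of_nonneg_left (rpow_le_rpow_of_nonpos (by positivity) (by exact_mod_cast hst)
    (by norm_num)) h.ε_pos.le

theorem sum_lam_sq_le (h : IsBlackwellPlay ε lam j x α R₁ R₂) (t : ℕ) :
    ∑ s ∈ Icc 1 t, lam s ^ 2 ≤ 3 * ε ^ 2 := by
  have hsq : ∀ s ∈ Icc 1 t, lam s ^ 2 = ε ^ 2 * (√(s : ℝ) ^ 3)⁻¹ := fun s hs => by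
    rw [h.lam_eq s (mem_Icc.1 hs).1, mul_pow, rpow_neg_three_quarters_sq (Nat.cast_nonneg s)]
  rw [sum_congr rfl hsq, ← mul_sum]
  have := sum_Icc_inv_sqrt_pow_three_le t
  have : 0 ≤ 2 / √(t : ℝ) := by positivity
  nlinarith [sq_nonneg ε]

theorem one_le_of_inv_pow_le (h : IsBlackwellPlay ε lam j x α R₁ R₂) {T : ℕ}
    (hT : ε⁻¹ ^ 8 ≤ T) : 1 ≤ T := by
  exact_mod_cast (one_le_pow₀ ((one_le_inv₀ h.ε_pos).2 h.ε_le_one)).trans hT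

theorem lam_inv_le (h : IsBlackwellPlay ε lam j x α R₁ R₂) {T : ℕ} (hT : ε⁻¹ ^ 8 ≤ T) :
    (lam T)⁻¹ ≤ ε * T := by
  have hε := h.ε_pos
  have hT₁ := h.one_le_of_inv_pow_le hT
  have hT₀ : (0 : ℝ) ≤ T := Nat.cast_nonneg T
  have hroot : ε⁻¹ ^ 2 ≤ (T : ℝ) ^ (1 / 4 : ℝ) := by
    calc ε⁻¹ ^ 2 = (ε⁻¹ ^ 8) ^ (1 / 4 : ℝ) := by
          rw [← rpow_natCast, ← rpow_natCast, ← rpow_mul (by positivity)]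
          norm_num
      _ ≤ (T : ℝ) ^ (1 / 4 : ℝ) := by gcongr
  calc (lam T)⁻¹ = ε⁻¹ * (T : ℝ) ^ (3 / 4 : ℝ) := by
        rw [h.lam_eq T hT₁, mul_inv, ← rpow_neg hT₀]
        norm_num
    _ = ε * (ε⁻¹ ^ 2 * (T : ℝ) ^ (3 / 4 : ℝ)) := by field_simp
    _ ≤ ε * ((T : ℝ) ^ (1 / 4 : ℝ) * (T : ℝ) ^ (3 / 4 : ℝ)) := by gcongr
    _ = ε * T := by
        rw [← rpow_add (by exact_mod_cast hT₁)]
        norm_num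

theorem R₁_nonneg (h : IsBlackwellPlay ε lam j x α R₁ R₂) (t : ℕ) : 0 ≤ R₁ t :=
  (h.R₁_eq t).symm ▸ le_max_left _ _

theorem R₂_nonneg (h : IsBlackwellPlay ε lam j x α R₁ R₂) (t : ℕ) : 0 ≤ R₂ t :=
  (h.R₂_eq t).symm ▸ le_max_left _ _

theorem x_nonneg (h : IsBlackwellPlay ε lam j x α R₁ R₂) (ht : 1 ≤ t) : 0 ≤ x t :=
  (h.x_eq t ht).symm ▸ blackwellMix_nonneg (h.lam_pos ht).le (h.R₁_nonneg _) (h.R₂_nonneg _)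

theorem x_le_lam (h : IsBlackwellPlay ε lam j x α R₁ R₂) (ht : 1 ≤ t) : x t ≤ lam t :=
  (h.x_eq t ht).symm ▸ blackwellMix_le (h.lam_pos ht) (h.R₁_nonneg _) (h.R₂_nonneg _)

theorem orthogonal (h : IsBlackwellPlay ε lam j x α R₁ R₂) (ht : 1 ≤ t) :
    R₁ (t - 1) * (α t * x t * (1 - 2 * j t)) +
      lam t ^ 2 * R₂ (t - 1) * (α t * ((lam t)⁻¹ * x t - 1) * (1 - 2 * j t)) = 0 := by
  have := blackwellMix_orthogonal (h.lam_pos ht) (h.R₁_nonneg (t - 1)) (h.R₂_nonneg (t - 1))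
  rw [← h.x_eq t ht] at this
  linear_combination (α t * (1 - 2 * j t)) * this

theorem α_nonneg (h : IsBlackwellPlay ε lam j x α R₁ R₂) (t : ℕ) : 0 ≤ α t := by
  rw [h.α_eq]
  refine prod_nonneg fun s hs => ?_
  have hs := (mem_Icc.1 hs).1
  linarith [h.x_le_lam hs, h.lam_le_one hs]

theorem α_le_one (h : IsBlackwellPlay ε lam j x α R₁ R₂) (t : ℕ) : α t ≤ 1 := by
  rw [h.α_eq]
  refine prod_le_one (fun s hs => ?_) fun s hs => ?_ <;> have hs := (mem_Icc.1 hs).1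
  · linarith [h.x_le_lam hs, h.lam_le_one hs]
  · linarith [h.x_nonneg hs]

theorem sum_α_mul_x_le_one (h : IsBlackwellPlay ε lam j x α R₁ R₂) (t : ℕ) :
    ∑ s ∈ Icc 1 t, α s * x s ≤ 1 := by
  simp_rw [h.α_eq]
  rw [sum_Icc_mul_prod_one_sub, ← Nat.add_sub_cancel t 1, ← h.α_eq]
  linarith [h.α_nonneg (t + 1)]

theorem one_sub_two_mul_j_sq (h : IsBlackwellPlay ε lam j x α R₁ R₂) (t : ℕ) :
    (1 - 2 * j t) ^ 2 = 1 := by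
  rcases h.j_eq t with hj | hj <;> rw [hj] <;> norm_num

theorem increment₁_sq_le (h : IsBlackwellPlay ε lam j x α R₁ R₂) (ht : 1 ≤ t) :
    (α t * x t * (1 - 2 * j t)) ^ 2 ≤ lam t ^ 2 := by
  rw [mul_pow, h.one_sub_two_mul_j_sq, mul_one]
  exact pow_le_pow_left₀ (mul_nonneg (h.α_nonneg t) (h.x_nonneg ht))
    ((mul_le_of_le_one_left (h.x_nonneg ht) (h.α_le_one t)).trans (h.x_le_lam ht)) 2

theorem increment₂_sq_le (h : IsBlackwellPlay ε lam j x α R₁ R₂) (ht : 1 ≤ t) :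
    (α t * ((lam t)⁻¹ * x t - 1) * (1 - 2 * j t)) ^ 2 ≤ 1 := by
  have hu : (lam t)⁻¹ * x t ≤ 1 := inv_mul_le_one_of_le₀ (h.x_le_lam ht) (h.lam_pos ht).le
  have hu₀ : 0 ≤ (lam t)⁻¹ * x t := mul_nonneg (inv_nonneg.2 (h.lam_pos ht).le) (h.x_nonneg ht)
  rw [mul_pow, h.one_sub_two_mul_j_sq, mul_one, ← neg_sq, ← mul_neg, neg_sub]
  exact pow_le_one₀ (mul_nonneg (h.α_nonneg t) (by linarith))
    (mul_le_one₀ (h.α_le_one t) (by linarith) (by linarith))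

theorem potential_le (h : IsBlackwellPlay ε lam j x α R₁ R₂) (t : ℕ) :
    R₁ t ^ 2 + lam t ^ 2 * R₂ t ^ 2 ≤ 6 * ε ^ 2 := by
  have hΦ := blackwell_potential_le h.R₁_eq h.R₂_eq
    (fun t ht => pow_le_pow_left₀ (h.lam_pos (by omega)).le (h.lam_anti ht (by omega)) 2)
    (fun _ ht => h.increment₁_sq_le ht) (fun _ ht => h.increment₂_sq_le ht)
    (fun _ ht => h.orthogonal ht) t
  linarith [h.sum_lam_sq_le t]

theorem R₁_le (h : IsBlackwellPlay ε lam j x α R₁ R₂) (t : ℕ) : R₁ t ≤ 3 * ε := by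
  refine (abs_le_of_sq_le_sq' ?_ (by linarith [h.ε_pos])).2
  nlinarith [h.potential_le t, mul_nonneg (sq_nonneg (lam t)) (sq_nonneg (R₂ t))]

theorem lam_mul_R₂_le (h : IsBlackwellPlay ε lam j x α R₁ R₂) (t : ℕ) :
    lam t * R₂ t ≤ 3 * ε := by
  refine (abs_le_of_sq_le_sq' ?_ (by linarith [h.ε_pos])).2
  nlinarith [h.potential_le t, sq_nonneg (R₁ t)]

theorem sum_le_R₁ (h : IsBlackwellPlay ε lam j x α R₁ R₂) (t : ℕ) :
    ∑ s ∈ Icc 1 t, α s * x s * (1 - 2 * j s) ≤ R₁ t := by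
  rw [h.R₁_eq]
  exact le_max_right _ _

theorem sum_le_R₂ (h : IsBlackwellPlay ε lam j x α R₁ R₂) (t : ℕ) :
    ∑ s ∈ Icc 1 t, α s * ((lam s)⁻¹ * x s - 1) * (1 - 2 * j s) ≤ R₂ t := by
  rw [h.R₂_eq]
  exact le_max_right _ _

theorem absorbed_payoff_ge (h : IsBlackwellPlay ε lam j x α R₁ R₂) (T : ℕ) :
    -(3 * ε * T) ≤ ∑ t ∈ Icc 1 T, ∑ s ∈ Icc 1 (t - 1), α s * x s * (2 * j s - 1) := by
  have hterm : ∀ t ∈ Icc 1 T, -(3 * ε) ≤ ∑ s ∈ Icc 1 (t - 1), α s * x s * (2 * j s - 1) :=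
    fun t _ => by
      have : ∑ s ∈ Icc 1 (t - 1), α s * x s * (2 * j s - 1) =
          -∑ s ∈ Icc 1 (t - 1), α s * x s * (1 - 2 * j s) := by
        rw [← sum_neg_distrib]
        exact sum_congr rfl fun s _ => by ring
      linarith [h.sum_le_R₁ (t - 1), h.R₁_le (t - 1)]
  simpa [mul_comm] using card_nsmul_le_sum _ _ _ hterm

theorem current_payoff_ge_neg (h : IsBlackwellPlay ε lam j x α R₁ R₂) (T : ℕ) :
    -(T : ℝ) ≤ ∑ t ∈ Icc 1 T, α t * (2 * x t - 1) * (2 * j t - 1) := by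
  have hterm : ∀ t ∈ Icc 1 T, -1 ≤ α t * (2 * x t - 1) * (2 * j t - 1) := fun t ht => by
    have ht := (mem_Icc.1 ht).1
    have := h.α_nonneg t
    have := h.α_le_one t
    have := h.x_nonneg ht
    have := (h.x_le_lam ht).trans (h.lam_le_one ht)
    rcases h.j_eq t with hj | hj <;> rw [hj] <;> nlinarith
  simpa using card_nsmul_le_sum _ _ _ hterm

theorem R₂_le (h : IsBlackwellPlay ε lam j x α R₁ R₂) (ht : 1 ≤ t) :
    R₂ t ≤ 3 * ε * (lam t)⁻¹ := by
  rw [← div_eq_mul_inv, le_div_iff₀ (h.lam_pos ht), mul_comm]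
  exact h.lam_mul_R₂_le t

theorem neg_inv_lam_le_sum (h : IsBlackwellPlay ε lam j x α R₁ R₂) {T : ℕ} (hT : 1 ≤ T) :
    -(lam T)⁻¹ ≤ ∑ t ∈ Icc 1 T, (lam t)⁻¹ * (α t * x t * (1 - 2 * j t)) := by
  have hlamT := h.lam_pos hT
  have hterm : ∀ t ∈ Icc 1 T,
      -((lam T)⁻¹ * (α t * x t)) ≤ (lam t)⁻¹ * (α t * x t * (1 - 2 * j t)) := fun t ht => by
    obtain ⟨ht, htT⟩ := mem_Icc.1 ht
    have hαx := mul_nonneg (h.α_nonneg t) (h.x_nonneg ht)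
    have hinv := inv_anti₀ hlamT (h.lam_anti ht htT)
    have := inv_pos.2 (h.lam_pos ht)
    rcases h.j_eq t with hj | hj <;> rw [hj] <;>
      nlinarith [mul_le_mul_of_nonneg_right hinv hαx]
  calc -(lam T)⁻¹ ≤ -((lam T)⁻¹ * ∑ t ∈ Icc 1 T, α t * x t) := by
        nlinarith [h.sum_α_mul_x_le_one T, inv_pos.2 hlamT]
    _ ≤ _ := by
        rw [mul_sum, ← sum_neg_distrib]
        exact sum_le_sum hterm

theorem current_payoff_ge (h : IsBlackwellPlay ε lam j x α R₁ R₂) {T : ℕ} (hT : 1 ≤ T) :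
    -(6 * ε + (lam T)⁻¹ + 3 * ε * (lam T)⁻¹) ≤
      ∑ t ∈ Icc 1 T, α t * (2 * x t - 1) * (2 * j t - 1) := by
  have hsplit : ∑ t ∈ Icc 1 T, α t * (2 * x t - 1) * (2 * j t - 1) =
      ∑ t ∈ Icc 1 T, (lam t)⁻¹ * (α t * x t * (1 - 2 * j t))
        - 2 * ∑ t ∈ Icc 1 T, α t * x t * (1 - 2 * j t)
        - ∑ t ∈ Icc 1 T, α t * ((lam t)⁻¹ * x t - 1) * (1 - 2 * j t) := by
    rw [mul_sum, ← sum_sub_distrib, ← sum_sub_distrib]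
    exact sum_congr rfl fun t _ => by ring
  linarith [h.neg_inv_lam_le_sum hT, h.sum_le_R₁ T, h.R₁_le T, h.sum_le_R₂ T, h.R₂_le hT]

end IsBlackwellPlay

/-- Pathwise ε-uniform optimality guarantee for Player I's Blackwell strategy in the Big Match: for every `T ≥ ε⁻⁸` the (pathwise) `T`-stage payoff is at least `−9ε`. -/
theorem big_match_epsilon_optimal_guarantee
    (ε : ℝ) (hε : ε ∈ Set.Ioc (0 : ℝ) 1)
    (lam : ℕ → ℝ) (hlam : ∀ t : ℕ, 1 ≤ t → lam t = ε * (t : ℝ) ^ (-(3 : ℝ) / 4))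
    (j : ℕ → ℝ) (hj : ∀ t, j t = 0 ∨ j t = 1)
    (x α : ℕ → ℝ)
    (hα : ∀ t, α t = ∏ s ∈ Finset.Icc 1 (t - 1), (1 - x s))
    (R1 R2 : ℕ → ℝ)
    (hR1 : ∀ t, R1 t = max 0 (∑ s ∈ Finset.Icc 1 t, α s * x s * (1 - 2 * j s)))
    (hR2 : ∀ t, R2 t =
      max 0 (∑ s ∈ Finset.Icc 1 t, α s * ((lam s)⁻¹ * x s - 1) * (1 - 2 * j s)))
    (hx : ∀ t : ℕ, 1 ≤ t →
      x t = if R1 (t - 1) = 0 ∧ R2 (t - 1) = 0 then 0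
        else lam t ^ 2 * R2 (t - 1) / (R1 (t - 1) + lam t * R2 (t - 1))) :
    ∀ T : ℕ, ε ^ (-8 : ℤ) ≤ (T : ℝ) →
      (T : ℝ)⁻¹ * (∑ t ∈ Finset.Icc 1 T, ∑ s ∈ Finset.Icc 1 (t - 1),
          α s * x s * (2 * j s - 1)) +
        (T : ℝ)⁻¹ * (∑ t ∈ Finset.Icc 1 T,
          α t * (2 * x t - 1) * (2 * j t - 1)) ≥ -9 * ε := by
  have h : IsBlackwellPlay ε lam j x α R1 R2 := ⟨hε.1, hε.2, hlam, hj, hα, hR1, hR2, hx⟩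
  intro T hT
  rw [zpow_neg, ← inv_zpow, zpow_ofNat] at hT
  have hε₀ := h.ε_pos
  have hT₁ := h.one_le_of_inv_pow_le hT
  rw [ge_iff_le, ← mul_add, le_inv_mul_iff₀ (by exact_mod_cast hT₁)]
  have hfirst := h.absorbed_payoff_ge T
  rcases le_or_gt ε (1 / 3) with hsmall | hlarge
  · have hL := h.lam_inv_le hT
    have hT₃ : (3 : ℝ) ≤ T := calc
      (3 : ℝ) ≤ ε⁻¹ := by rw [le_inv_comm₀ (by norm_num) hε₀]; linarith
      _ ≤ ε⁻¹ ^ 8 := le_self_pow₀ (by rw [one_le_inv₀ hε₀]; linarith) (by norm_num)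
      _ ≤ T := hT
    have hsecond := h.current_payoff_ge hT₁
    have hεT : 0 ≤ ε * T := by positivity
    nlinarith [mul_le_mul_of_nonneg_left hL hε₀.le, mul_le_mul_of_nonneg_right hsmall hεT,
      mul_le_mul_of_nonneg_left hT₃ hε₀.le]
  · nlinarith [h.current_payoff_ge_neg T]
end

section
/- Fix ε ∈ (0,1] and set λ_t = ε·t^{-3/4} for t ≥ 1. Given a sequence (j_t)_{t≥1} with j_t ∈ {0,1}, define sequences (x_t)_{t≥1} and (α_t)_{t≥1} recursively by: α_t = ∏_{s=1}^{t-1}(1 − x_s) (so α_1 = 1); R¹_{t-1} = max(0, ∑_{s=1}^{t-1} α_s x_s (1 − 2j_s)) and R²_{t-1} = max(0, ∑_{s=1}^{t-1} α_s (λ_s^{-1} x_s − 1)(1 − 2j_s)); and x_t = 0 if (R¹_{t-1}, R²_{t-1}) = (0,0), and x_t = λ_t²·R²_{t-1} / (R¹_{t-1} + λ_t·R²_{t-1}) otherwise. Then for every T ≥ 1: (1/T)·∑_{t=1}^T ∑_{s=1}^{t-1} α_s x_s (1 − 2j_s) ≤ 3ε. -/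
open Finset

/-!
The vector regret `(R¹_t, R²_t)` is controlled by the weighted potential
`Φ_t = (R¹_t)² + λ_{t+1}² (R²_t)²`. The weight `x_t` is Blackwell's choice: it makes the stage
vector `(x_t, x_t / λ_t - 1)` orthogonal to `(R¹_{t-1}, λ_t² R²_{t-1})`, so the cross term of
`Φ` vanishes and, the increments being bounded by `λ_t` and `1`, `Φ` grows by at most `2 λ_t²`
per stage (taking positive parts and letting `λ` decrease only help). Hence
`(R¹_t)² ≤ 2 ∑ λ_s² = 2 ε² ∑ s^(-3/2) ≤ 6 ε²`, and every inner sum of the double sum is at most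
`R¹_{t-1} ≤ 3 ε`.
-/

theorem rpow_neg_three_halves_eq {x : ℝ} (hx : 0 ≤ x) : x ^ (-(3 : ℝ) / 2) = (√x ^ 3)⁻¹ := by
  rw [Real.sqrt_eq_rpow, ← Real.rpow_natCast, ← Real.rpow_mul hx, ← Real.rpow_neg hx]
  norm_num

theorem rpow_neg_three_halves_le_sub {n : ℝ} (hn : 0 < n) :
    (n + 1) ^ (-(3 : ℝ) / 2) ≤ 2 / √n - 2 / √(n + 1) := by
  have ha : 0 < √n := Real.sqrt_pos.2 hn
  have hab : √n ≤ √(n + 1) := Real.sqrt_le_sqrt (by linarith)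
  have hb : 0 < √(n + 1) := ha.trans_le hab
  have hsq : √(n + 1) ^ 2 - √n ^ 2 = 1 := by
    rw [Real.sq_sqrt hn.le, Real.sq_sqrt (by linarith)]; ring
  calc (n + 1) ^ (-(3 : ℝ) / 2) = 2 / (√(n + 1) * √(n + 1) * (√(n + 1) + √(n + 1))) := by
        rw [rpow_neg_three_halves_eq (by linarith)]; field_simp; ring
    _ ≤ 2 / (√n * √(n + 1) * (√n + √(n + 1))) := by gcongr
    _ = 2 / √n - 2 / √(n + 1) := by
        field_simp
        linear_combination -hsq

theorem sum_Icc_rpow_neg_three_halves_le {t : ℕ} (ht : 1 ≤ t) :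
    ∑ s ∈ Icc 1 t, (s : ℝ) ^ (-(3 : ℝ) / 2) ≤ 3 - 2 / √t := by
  induction t, ht using Nat.le_induction with
  | base => norm_num
  | succ n hn ih =>
    rw [sum_Icc_succ_top (by omega)]
    have := rpow_neg_three_halves_le_sub (n := n) (by exact_mod_cast hn)
    push_cast
    linarith

theorem sum_Icc_rpow_neg_three_halves_le_three (t : ℕ) :
    ∑ s ∈ Icc 1 t, (s : ℝ) ^ (-(3 : ℝ) / 2) ≤ 3 := by
  rcases Nat.eq_zero_or_pos t with rfl | ht
  · norm_num
  · linarith [sum_Icc_rpow_neg_three_halves_le ht, show 0 ≤ 2 / √(t : ℝ) by positivity]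

noncomputable def stepSize (ε : ℝ) (t : ℕ) : ℝ := ε * (t : ℝ) ^ (-(3 : ℝ) / 4)

section StepSize

variable {ε : ℝ} {t : ℕ}

theorem stepSize_pos (hε : 0 < ε) (ht : 1 ≤ t) : 0 < stepSize ε t := by
  unfold stepSize
  have : (0 : ℝ) < t := by exact_mod_cast ht
  positivity

theorem stepSize_le (hε : 0 ≤ ε) (ht : 1 ≤ t) : stepSize ε t ≤ ε :=
  mul_le_of_le_one_right hε
    (Real.rpow_le_one_of_one_le_of_nonpos (by exact_mod_cast ht) (by norm_num))

theorem stepSize_succ_le (hε : 0 ≤ ε) (ht : 1 ≤ t) : stepSize ε (t + 1) ≤ stepSize ε t :=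
  mul_le_mul_of_nonneg_left
    (Real.rpow_le_rpow_of_nonpos (by exact_mod_cast ht) (by simp) (by norm_num)) hε

theorem stepSize_sq (ε : ℝ) (t : ℕ) : stepSize ε t ^ 2 = ε ^ 2 * (t : ℝ) ^ (-(3 : ℝ) / 2) := by
  rw [stepSize, mul_pow, ← Real.rpow_natCast ((t : ℝ) ^ _) 2, ← Real.rpow_mul (Nat.cast_nonneg t)]
  norm_num

theorem sum_stepSize_sq_le (ε : ℝ) (t : ℕ) : ∑ s ∈ Icc 1 t, stepSize ε s ^ 2 ≤ 3 * ε ^ 2 := by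
  simp_rw [stepSize_sq, ← mul_sum]
  nlinarith [sum_Icc_rpow_neg_three_halves_le_three t, sq_nonneg ε]

end StepSize

noncomputable def blackwellWeight (l r₁ r₂ : ℝ) : ℝ :=
  if r₁ = 0 ∧ r₂ = 0 then 0 else l ^ 2 * r₂ / (r₁ + l * r₂)

section BlackwellWeight

variable {l r₁ r₂ : ℝ}

theorem blackwellWeight_nonneg (hl : 0 ≤ l) (hr₁ : 0 ≤ r₁) (hr₂ : 0 ≤ r₂) :
    0 ≤ blackwellWeight l r₁ r₂ := by
  unfold blackwellWeight
  split_ifs <;> positivity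

theorem blackwellWeight_le (hl : 0 ≤ l) (hr₁ : 0 ≤ r₁) (hr₂ : 0 ≤ r₂) :
    blackwellWeight l r₁ r₂ ≤ l := by
  unfold blackwellWeight
  split_ifs
  · exact hl
  · exact div_le_of_le_mul₀ (by positivity) hl (by nlinarith)

theorem blackwellWeight_orthogonal (hl : 0 < l) (hr₁ : 0 ≤ r₁) (hr₂ : 0 ≤ r₂) :
    r₁ * blackwellWeight l r₁ r₂ + l ^ 2 * (r₂ * (l⁻¹ * blackwellWeight l r₁ r₂ - 1)) = 0 := by
  unfold blackwellWeight
  split_ifs with h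
  · simp [h.1, h.2]
  · have hd : 0 < r₁ + l * r₂ := by
      rcases not_and_or.1 h with h | h
      · have := lt_of_le_of_ne hr₁ (Ne.symm h); positivity
      · have := lt_of_le_of_ne hr₂ (Ne.symm h); positivity
    field_simp
    ring

end BlackwellWeight

theorem sq_max_zero_add_le_s9 {s r u : ℝ} (h : s ≤ r) : max 0 (s + u) ^ 2 ≤ (r + u) ^ 2 := by
  rw [← sq_abs (r + u)]
  exact pow_le_pow_left₀ (le_max_left _ _)
    (max_le (abs_nonneg _) ((by linarith : s + u ≤ r + u).trans (le_abs_self _))) 2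

theorem potential_step {l r₁ r₂ s₁ s₂ w a σ : ℝ} (hs₁ : s₁ ≤ r₁) (hs₂ : s₂ ≤ r₂)
    (hw₀ : 0 ≤ w) (hwl : w ≤ l) (horth : r₁ * w + l ^ 2 * (r₂ * (l⁻¹ * w - 1)) = 0)
    (ha : a ∈ Set.Icc (0 : ℝ) 1) (hσ : |σ| ≤ 1) :
    max 0 (s₁ + a * w * σ) ^ 2 + l ^ 2 * max 0 (s₂ + a * (l⁻¹ * w - 1) * σ) ^ 2 ≤
      r₁ ^ 2 + l ^ 2 * r₂ ^ 2 + 2 * l ^ 2 := by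
  have hc : (a * σ) ^ 2 ≤ 1 := by
    rw [← sq_abs, abs_mul, abs_of_nonneg ha.1]
    exact pow_le_one₀ (mul_nonneg ha.1 (abs_nonneg σ)) (mul_le_one₀ ha.2 (abs_nonneg σ) hσ)
  have hv : (l⁻¹ * w - 1) ^ 2 ≤ 1 := by
    have : 0 ≤ l⁻¹ * w := mul_nonneg (inv_nonneg.2 (hw₀.trans hwl)) hw₀
    have : l⁻¹ * w ≤ 1 := by rw [inv_mul_eq_div]; exact div_le_one_of_le₀ hwl (hw₀.trans hwl)
    nlinarith
  have hw : w ^ 2 + l ^ 2 * (l⁻¹ * w - 1) ^ 2 ≤ 2 * l ^ 2 := by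
    nlinarith [pow_le_pow_left₀ hw₀ hwl 2, mul_le_mul_of_nonneg_left hv (sq_nonneg l)]
  calc _ ≤ (r₁ + a * w * σ) ^ 2 + l ^ 2 * (r₂ + a * (l⁻¹ * w - 1) * σ) ^ 2 :=
        add_le_add (sq_max_zero_add_le_s9 hs₁)
          (mul_le_mul_of_nonneg_left (sq_max_zero_add_le_s9 hs₂) (sq_nonneg l))
    _ = r₁ ^ 2 + l ^ 2 * r₂ ^ 2 + 2 * (a * σ) * (r₁ * w + l ^ 2 * (r₂ * (l⁻¹ * w - 1))) +
          (a * σ) ^ 2 * (w ^ 2 + l ^ 2 * (l⁻¹ * w - 1) ^ 2) := by ring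
    _ ≤ r₁ ^ 2 + l ^ 2 * r₂ ^ 2 + 2 * l ^ 2 := by
        rw [horth, mul_zero, add_zero]
        nlinarith [mul_le_mul hc hw (by positivity) zero_le_one]

theorem blackwell_potential_le_s9 {lam α σ x R₁ R₂ : ℕ → ℝ}
    (hlam_pos : ∀ t, 1 ≤ t → 0 < lam t) (hlam_anti : ∀ t, 1 ≤ t → lam (t + 1) ≤ lam t)
    (hα : ∀ t, 1 ≤ t → α t ∈ Set.Icc 0 1) (hσ : ∀ t, |σ t| ≤ 1)
    (hR₁ : ∀ t, R₁ t = max 0 (∑ s ∈ Icc 1 t, α s * x s * σ s))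
    (hR₂ : ∀ t, R₂ t = max 0 (∑ s ∈ Icc 1 t, α s * ((lam s)⁻¹ * x s - 1) * σ s))
    (hx : ∀ t, 1 ≤ t → x t = blackwellWeight (lam t) (R₁ (t - 1)) (R₂ (t - 1))) (t : ℕ) :
    R₁ t ^ 2 + lam (t + 1) ^ 2 * R₂ t ^ 2 ≤ 2 * ∑ s ∈ Icc 1 t, lam s ^ 2 := by
  induction t with
  | zero => simp [hR₁, hR₂]
  | succ t ih =>
    have hl := hlam_pos (t + 1) (by omega)
    have hr₁ : 0 ≤ R₁ t := hR₁ t ▸ le_max_left _ _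
    have hr₂ : 0 ≤ R₂ t := hR₂ t ▸ le_max_left _ _
    have hstep : R₁ (t + 1) ^ 2 + lam (t + 1) ^ 2 * R₂ (t + 1) ^ 2 ≤
        R₁ t ^ 2 + lam (t + 1) ^ 2 * R₂ t ^ 2 + 2 * lam (t + 1) ^ 2 := by
      rw [hR₁ (t + 1), hR₂ (t + 1), sum_Icc_succ_top (by omega), sum_Icc_succ_top (by omega),
        hx (t + 1) (by omega)]
      exact potential_step (hR₁ t ▸ le_max_right _ _) (hR₂ t ▸ le_max_right _ _)
        (blackwellWeight_nonneg hl.le hr₁ hr₂) (blackwellWeight_le hl.le hr₁ hr₂)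
        (blackwellWeight_orthogonal hl hr₁ hr₂) (hα _ (by omega)) (hσ _)
    have hdecay : lam (t + 2) ^ 2 * R₂ (t + 1) ^ 2 ≤ lam (t + 1) ^ 2 * R₂ (t + 1) ^ 2 := by
      gcongr
      · exact (hlam_pos _ (by omega)).le
      · exact hlam_anti _ (by omega)
    rw [sum_Icc_succ_top (by omega)]
    linarith

theorem prod_one_sub_mem_Icc {ι R : Type*} [CommRing R] [PartialOrder R] [IsOrderedRing R]
    {s : Finset ι} {f : ι → R} (hf : ∀ i ∈ s, f i ∈ Set.Icc 0 1) :
    ∏ i ∈ s, (1 - f i) ∈ Set.Icc 0 1 :=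
  ⟨prod_nonneg fun i hi => sub_nonneg.2 (hf i hi).2,
    prod_le_one (fun i hi => sub_nonneg.2 (hf i hi).2) fun i hi => sub_le_self 1 (hf i hi).1⟩

/-- Double-sum (absorption-payoff) bound for the Big Match: `(1/T) ∑_{t=1}^T ∑_{s=1}^{t-1} α_s x_s (1 − 2j_s) ≤ 3ε` for every `T ≥ 1`. -/
theorem big_match_double_sum_bound
    (ε : ℝ) (hε : ε ∈ Set.Ioc (0 : ℝ) 1)
    (lam : ℕ → ℝ) (hlam : ∀ t : ℕ, 1 ≤ t → lam t = ε * (t : ℝ) ^ (-(3 : ℝ) / 4))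
    (j : ℕ → ℝ) (hj : ∀ t, j t = 0 ∨ j t = 1)
    (x α : ℕ → ℝ)
    (hα : ∀ t, α t = ∏ s ∈ Finset.Icc 1 (t - 1), (1 - x s))
    (R1 R2 : ℕ → ℝ)
    (hR1 : ∀ t, R1 t = max 0 (∑ s ∈ Finset.Icc 1 t, α s * x s * (1 - 2 * j s)))
    (hR2 : ∀ t, R2 t =
      max 0 (∑ s ∈ Finset.Icc 1 t, α s * ((lam s)⁻¹ * x s - 1) * (1 - 2 * j s)))
    (hx : ∀ t : ℕ, 1 ≤ t →
      x t = if R1 (t - 1) = 0 ∧ R2 (t - 1) = 0 then 0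
        else lam t ^ 2 * R2 (t - 1) / (R1 (t - 1) + lam t * R2 (t - 1))) :
    ∀ T : ℕ, 1 ≤ T →
      (T : ℝ)⁻¹ * (∑ t ∈ Finset.Icc 1 T, ∑ s ∈ Finset.Icc 1 (t - 1),
          α s * x s * (1 - 2 * j s)) ≤ 3 * ε := by
  obtain ⟨hε₀, hε₁⟩ := hε
  have hlam_pos t (ht : 1 ≤ t) : 0 < lam t := hlam t ht ▸ stepSize_pos hε₀ ht
  have hx_mem t (ht : 1 ≤ t) : x t ∈ Set.Icc 0 1 := by
    have hr₁ : 0 ≤ R1 (t - 1) := hR1 _ ▸ le_max_left _ _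
    have hr₂ : 0 ≤ R2 (t - 1) := hR2 _ ▸ le_max_left _ _
    rw [hx t ht]
    exact ⟨blackwellWeight_nonneg (hlam_pos t ht).le hr₁ hr₂, (blackwellWeight_le
      (hlam_pos t ht).le hr₁ hr₂).trans (hlam t ht ▸ (stepSize_le hε₀.le ht).trans hε₁)⟩
  have hpotential := blackwell_potential_le_s9 hlam_pos
    (fun t ht => by rw [hlam t ht, hlam (t + 1) (by omega)]; exact stepSize_succ_le hε₀.le ht)
    (fun t _ => hα t ▸ prod_one_sub_mem_Icc fun s hs => hx_mem s (mem_Icc.1 hs).1)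
    (fun t => by rcases hj t with h | h <;> norm_num [h]) hR1 hR2 hx
  have hR1_le t : R1 t ≤ 3 * ε := by
    have hsum : ∑ s ∈ Icc 1 t, lam s ^ 2 ≤ 3 * ε ^ 2 := by
      rw [sum_congr rfl fun s hs => by rw [hlam s (mem_Icc.1 hs).1]]
      exact sum_stepSize_sq_le ε t
    have hR1_nonneg : 0 ≤ R1 t := hR1 t ▸ le_max_left _ _
    nlinarith [hpotential t, sq_nonneg (lam (t + 1) * R2 t)]
  intro T hT
  rw [inv_mul_le_iff₀ (by exact_mod_cast hT)]
  calc _ ≤ ∑ _t ∈ Icc 1 T, 3 * ε :=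
        sum_le_sum fun t _ => (hR1 (t - 1) ▸ le_max_right _ _).trans (hR1_le (t - 1))
    _ = T * (3 * ε) := by simp
end

section
/- Let ε ∈ (0,1), let (x_t)_{t≥1} be a sequence in [0,1], and let α_t = ∏_{s=1}^{t-1}(1 − x_s) (so α_1 = 1). Assume that for every T ≥ 1, (1/T)·∑_{t=1}^T ∑_{s=1}^{t-1} α_s x_s ≤ ε. Then for every t ≥ 1 with (t−1)·ε < 1, one has α_t x_t ≤ ε and x_t ≤ ε/(1 − (t−1)ε). -/
/-!
The sums `S n = ∑_{s ≤ n} α_s x_s` are nondecreasing, and the hypothesis says that their Cesàro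
means are at most `ε`; a nondecreasing sequence with Cesàro means at most `ε` is itself at most
`ε`. Hence every term `α_t x_t` is at most `ε`. Expanding the product defining `α_t` telescopes
to `α_t = 1 - S (t - 1) ≥ 1 - (t - 1) ε`, so `x_t ≤ ε / α_t ≤ ε / (1 - (t - 1) ε)`.
-/

open Finset

theorem prod_Icc_one_sub_eq_one_sub_sum {R : Type*} [CommRing R] (x : ℕ → R) (n : ℕ) :
    ∏ s ∈ Icc 1 n, (1 - x s) = 1 - ∑ s ∈ Icc 1 n, (∏ r ∈ Icc 1 (s - 1), (1 - x r)) * x s := by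
  rw [prod_one_sub_ordered]
  congr 1
  refine sum_congr rfl fun s hs => ?_
  rw [mul_comm]
  congr 2
  ext r
  simp only [mem_filter, mem_Icc] at hs ⊢
  omega

theorem sum_Icc_one_comp_sub_one {M : Type*} [AddCommMonoid M] (f : ℕ → M) (n : ℕ) :
    ∑ t ∈ Icc 1 n, f (t - 1) = ∑ t ∈ range n, f t := by
  induction n with
  | zero => simp
  | succ n ih => rw [sum_Icc_succ_top (by omega), ih, sum_range_succ, Nat.add_sub_cancel]

theorem Monotone.le_of_sum_range_le_mul {b : ℕ → ℝ} (hb : Monotone b) {ε : ℝ}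
    (h : ∀ T : ℕ, ∑ t ∈ range T, b t ≤ T * ε) (m : ℕ) : b m ≤ ε := by
  have lower (N : ℕ) : m * b 0 + N * b m ≤ (m + N) * ε := by
    have head : m • b 0 ≤ ∑ t ∈ range m, b t := by
      simpa using card_nsmul_le_sum (range m) b (b 0) fun t _ => hb t.zero_le
    have tail : N • b m ≤ ∑ k ∈ range N, b (m + k) := by
      simpa using card_nsmul_le_sum (range N) _ (b m) fun k _ => hb (m.le_add_right k)
    have total := h (m + N)
    rw [sum_range_add, Nat.cast_add] at total
    simpa using (add_le_add head tail).trans total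
  by_contra! hm
  have hgap : 0 < b m - ε := by linarith
  obtain ⟨N, hN⟩ := exists_nat_gt (m * (ε - b 0) / (b m - ε))
  rw [div_lt_iff₀ hgap] at hN
  linarith [lower N]

theorem big_match_small_absorption_probabilities_general
    (ε : ℝ)
    (x : ℕ → ℝ) (hx : ∀ t, x t ∈ Set.Icc (0 : ℝ) 1)
    (α : ℕ → ℝ) (hα : ∀ t, α t = ∏ s ∈ Finset.Icc 1 (t - 1), (1 - x s))
    (hyp : ∀ T : ℕ, 1 ≤ T →
      (T : ℝ)⁻¹ * ∑ t ∈ Finset.Icc 1 T, ∑ s ∈ Finset.Icc 1 (t - 1),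
        α s * x s ≤ ε) :
    ∀ t : ℕ, 1 ≤ t → ((t : ℝ) - 1) * ε < 1 →
      α t * x t ≤ ε ∧ x t ≤ ε / (1 - ((t : ℝ) - 1) * ε) := by
  intro t ht htε
  set S : ℕ → ℝ := fun n => ∑ s ∈ Icc 1 n, α s * x s
  have term_nonneg (s : ℕ) : 0 ≤ α s * x s :=
    mul_nonneg (hα s ▸ prod_nonneg fun r _ => sub_nonneg.2 (hx r).2) (hx s).1
  have S_le (n : ℕ) : S n ≤ ε := by
    refine Monotone.le_of_sum_range_le_mul (fun m n hmn => ?_) (fun T => ?_) n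
    · exact sum_le_sum_of_subset_of_nonneg (Icc_subset_Icc_right hmn) fun s _ _ => term_nonneg s
    · rcases T.eq_zero_or_pos with rfl | hT
      · simp
      · rw [← sum_Icc_one_comp_sub_one, ← inv_mul_le_iff₀ (Nat.cast_pos.2 hT)]
        exact hyp T hT
  have term_le {s : ℕ} (hs : 1 ≤ s) : α s * x s ≤ ε :=
    (single_le_sum (fun r _ => term_nonneg r) (mem_Icc.2 ⟨hs, le_rfl⟩)).trans (S_le s)
  have α_lower : 1 - ((t : ℝ) - 1) * ε ≤ α t := by
    have hsum : S (t - 1) ≤ ((t : ℝ) - 1) * ε := by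
      have := sum_le_card_nsmul (Icc 1 (t - 1)) _ ε fun s hs => term_le (mem_Icc.1 hs).1
      rwa [Nat.card_Icc, Nat.add_sub_cancel, nsmul_eq_mul, Nat.cast_sub ht, Nat.cast_one] at this
    rw [hα, prod_Icc_one_sub_eq_one_sub_sum]
    simp only [← hα]
    linarith
  have hpos : 0 < 1 - ((t : ℝ) - 1) * ε := by linarith
  refine ⟨term_le ht, (le_div_iff₀ hpos).2 ?_⟩
  nlinarith [(hx t).1, term_le ht]

/-- Any strategy of Player I guaranteeing
`(1/T) ∑_{t=1}^T ∑_{s=1}^{t-1} α_s x_s ≤ ε` for all `T ≥ 1` must play small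
probabilities of the absorbing action: for every `t ≥ 1` with `(t−1)ε < 1`,
one has `α_t x_t ≤ ε` and `x_t ≤ ε/(1 − (t−1)ε)`. -/
theorem big_match_small_absorption_probabilities
    (ε : ℝ) (hε : ε ∈ Set.Ioo (0 : ℝ) 1)
    (x : ℕ → ℝ) (hx : ∀ t, x t ∈ Set.Icc (0 : ℝ) 1)
    (α : ℕ → ℝ) (hα : ∀ t, α t = ∏ s ∈ Finset.Icc 1 (t - 1), (1 - x s))
    (hyp : ∀ T : ℕ, 1 ≤ T →
      (T : ℝ)⁻¹ * ∑ t ∈ Finset.Icc 1 T, ∑ s ∈ Finset.Icc 1 (t - 1),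
        α s * x s ≤ ε) :
    ∀ t : ℕ, 1 ≤ t → ((t : ℝ) - 1) * ε < 1 →
      α t * x t ≤ ε ∧ x t ≤ ε / (1 - ((t : ℝ) - 1) * ε) :=
  big_match_small_absorption_probabilities_general ε x hx α hα hyp
end
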